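/- arXiv:2012.15539 — 5 statements merged into one kernel-verified Lean document; each statement's English description precedes it below -/
import Mathlib

section
/- Let n ≥ 3 and Λ(Y) = Yⁿ + λ_{n-1}Y^{n-1} + … + λ₀ ∈ F_q[X][Y] with λ₀ ≠ 0. Suppose max_{i ≠ n-2} deg λ_i = deg λ_{n-2} ≥ 2·deg λ_{n-1}. If deg λ_{n-2} is odd, then Λ has no root in F_q((X^{-1})) of absolute value > 1. -/
/-!
Write `|x| = q^d` with `d > 0` and `m = deg λ_{n-2}`. The term `λ_i x^i` has order
`-(deg λ_i + i d)` in `F_q((X^{-1}))`. The hypotheses on the degrees say that, for this `d`, the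
largest of the numbers `deg λ_i + i d` is attained only at `i = n - 2` when `2d < m`, and only at
`i = n` when `2d > m`; the case `2d = m` is excluded because `m` is odd. One term therefore
strictly dominates the others, so `Λ(x) ≠ 0`.
-/

open scoped Classical
set_option linter.unusedVariables false

/-- Embedding of F_q[X] into F_q((X^{-1})): the Laurent-series variable is X^{-1},
so the polynomial variable X maps to the inverse, i.e. to `single (-1) 1`. -/
noncomputable def polyEmb (Fq : Type) [Field Fq] : Polynomial Fq →+* LaurentSeries Fq :=
  Polynomial.eval₂RingHom HahnSeries.C (HahnSeries.single (-1) 1)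

/-- Absolute value |ω| = q^{γ(ω)} on F_q((X^{-1})), where γ(ω) = -order(ω). -/
noncomputable def labs (Fq : Type) [Field Fq] [Fintype Fq] (ω : LaurentSeries Fq) : ℝ :=
  if ω = 0 then 0 else (Fintype.card Fq : ℝ) ^ (-ω.order)

/-- Absolute value |λ| = q^{deg λ} on F_q[X]. -/
noncomputable def pabs (Fq : Type) [Field Fq] [Fintype Fq] (p : Polynomial Fq) : ℝ :=
  if p = 0 then 0 else (Fintype.card Fq : ℝ) ^ p.natDegree

open Polynomial

theorem AddValuation.map_sum_eq_of_lt {R Γ₀ : Type*} [Ring R]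
    [LinearOrderedAddCommMonoidWithTop Γ₀] (v : AddValuation R Γ₀) {ι : Type*} [DecidableEq ι]
    {s : Finset ι} {f : ι → R} {j : ι} (hj : j ∈ s) (hf : ∀ i ∈ s \ {j}, v (f j) < v (f i)) :
    v (∑ i ∈ s, f i) = v (f j) :=
  Valuation.map_sum_eq_of_lt v hj hf

theorem AddValuation.map_eval_eq_of_lt {R Γ₀ : Type*} [Ring R]
    [LinearOrderedAddCommMonoidWithTop Γ₀] (v : AddValuation R Γ₀) {P : R[X]} {x : R} {N j : ℕ}
    (hN : P.natDegree < N) (hj : j < N)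
    (h : ∀ i < N, i ≠ j → v (P.coeff j * x ^ j) < v (P.coeff i * x ^ i)) :
    v (P.eval x) = v (P.coeff j * x ^ j) := by
  rw [eval_eq_sum_range' hN]
  refine v.map_sum_eq_of_lt (Finset.mem_range.mpr hj) fun i hi => ?_
  simp only [Finset.mem_sdiff, Finset.mem_range, Finset.mem_singleton] at hi
  exact h i hi.1 hi.2

theorem addVal_single_lt {Fq : Type} [Field Fq] {a b : ℤ} (hab : a < b) {r s : Fq} (hr : r ≠ 0) :
    HahnSeries.addVal ℤ Fq (HahnSeries.single a r) < HahnSeries.addVal ℤ Fq (HahnSeries.single b s) := by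
  rcases eq_or_ne s 0 with rfl | hs
  · simp [HahnSeries.addVal_apply_of_ne, hr]
  · simp [HahnSeries.addVal_apply_of_ne, hr, hs, hab]

theorem addVal_polyEmb {Fq : Type} [Field Fq] {p : Fq[X]} (hp : p ≠ 0) :
    HahnSeries.addVal ℤ Fq (polyEmb Fq p) = ((-p.natDegree : ℤ) : WithTop ℤ) := by
  have hsum : polyEmb Fq p
      = ∑ i ∈ Finset.range (p.natDegree + 1), HahnSeries.single (-(i : ℤ)) (p.coeff i) := by
    change eval₂ HahnSeries.C (HahnSeries.single (-1) 1) p = _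
    rw [eval₂_eq_sum_range]
    refine Finset.sum_congr rfl fun i _ => ?_
    rw [HahnSeries.single_pow, HahnSeries.C_apply, HahnSeries.single_mul_single]
    simp
  have hlead : p.coeff p.natDegree ≠ 0 := leadingCoeff_ne_zero.mpr hp
  rw [hsum, HahnSeries.addVal ℤ Fq |>.map_sum_eq_of_lt (Finset.self_mem_range_succ _),
    HahnSeries.addVal_apply_of_ne (by simpa using hlead), HahnSeries.order_single hlead]
  intro i hi
  simp only [Finset.mem_sdiff, Finset.mem_range, Finset.mem_singleton] at hi
  exact addVal_single_lt (by omega) hlead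

theorem natDegree_le_of_pabs_le {Fq : Type} [Field Fq] [Fintype Fq] {p q : Fq[X]} (hq : q ≠ 0)
    (h : pabs Fq p ≤ pabs Fq q) : p.natDegree ≤ q.natDegree := by
  rcases eq_or_ne p 0 with rfl | hp
  · simp
  · have hcard : (1 : ℝ) < Fintype.card Fq := by exact_mod_cast Fintype.one_lt_card
    rw [pabs, pabs, if_neg hp, if_neg hq] at h
    exact (pow_le_pow_iff_right₀ hcard).mp h

section NewtonPolygon

variable {D : ℕ → ℕ} {k : ℕ} {d : ℤ}

theorem dominates_middle_of_two_mul_lt (hd : 0 < d) (hD : ∀ i < k + 2, D i ≤ D k)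
    (hD1 : 2 * D (k + 1) ≤ D k) (hDtop : D (k + 2) = 0) (hslope : 2 * d < D k) :
    ∀ i < k + 3, i ≠ k → (D i : ℤ) + i * d < D k + k * d := by
  intro i hi hik
  obtain hlt | rfl | rfl : i < k ∨ i = k + 1 ∨ i = k + 2 := by omega
  · have hDi : (D i : ℤ) ≤ D k := by exact_mod_cast hD i (by omega)
    have hid : (i : ℤ) * d < k * d := mul_lt_mul_of_pos_right (by exact_mod_cast hlt) hd
    linarith
  · have hD1' : 2 * (D (k + 1) : ℤ) ≤ D k := by exact_mod_cast hD1
    push_cast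
    linarith
  · simp only [hDtop, Nat.cast_zero]
    push_cast
    linarith

theorem dominates_top_of_lt_two_mul (hd : 0 < d) (hD : ∀ i < k + 2, D i ≤ D k)
    (hD1 : 2 * D (k + 1) ≤ D k) (hDtop : D (k + 2) = 0) (hslope : (D k : ℤ) < 2 * d) :
    ∀ i < k + 3, i ≠ k + 2 → (D i : ℤ) + i * d < D (k + 2) + (k + 2 : ℕ) * d := by
  intro i hi hik
  simp only [hDtop, Nat.cast_zero]
  obtain hle | rfl : i ≤ k ∨ i = k + 1 := by omega
  · have hDi : (D i : ℤ) ≤ D k := by exact_mod_cast hD i (by omega)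
    have hid : ((i + 2 : ℕ) : ℤ) * d ≤ (k + 2 : ℕ) * d :=
      mul_le_mul_of_nonneg_right (by exact_mod_cast (by omega : i + 2 ≤ k + 2)) hd.le
    push_cast at hid ⊢
    linarith
  · have hD1' : 2 * (D (k + 1) : ℤ) ≤ D k := by exact_mod_cast hD1
    push_cast
    linarith

end NewtonPolygon

theorem eval_map_polyEmb_ne_zero {Fq : Type} [Field Fq] {Λ : Fq[X][X]} {x : LaurentSeries Fq}
    (hx : x ≠ 0) {N j : ℕ} (hN : Λ.natDegree < N) (hj : j < N) (hΛj : Λ.coeff j ≠ 0)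
    (hdom : ∀ i < N, i ≠ j → ((Λ.coeff i).natDegree : ℤ) + i * -x.order
      < (Λ.coeff j).natDegree + j * -x.order) :
    (Λ.map (polyEmb Fq)).eval x ≠ 0 := by
  set v := HahnSeries.addVal ℤ Fq
  have hterm : ∀ i, Λ.coeff i ≠ 0 → v ((Λ.map (polyEmb Fq)).coeff i * x ^ i)
      = ((-((Λ.coeff i).natDegree + i * -x.order) : ℤ) : WithTop ℤ) := by
    intro i hi
    rw [coeff_map, v.map_mul, v.map_pow, addVal_polyEmb hi, HahnSeries.addVal_apply_of_ne hx,
      ← WithTop.coe_nsmul, ← WithTop.coe_add, nsmul_eq_mul]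
    congr 1
    ring
  intro hroot
  have hval := v.map_eval_eq_of_lt (P := Λ.map (polyEmb Fq)) (x := x) (natDegree_map_le.trans_lt hN) hj fun i hi hij => by
    rcases eq_or_ne (Λ.coeff i) 0 with hi0 | hi0
    · rw [hterm j hΛj, coeff_map, hi0, map_zero, zero_mul, v.map_zero]
      exact WithTop.coe_lt_top _
    · rw [hterm j hΛj, hterm i hi0, WithTop.coe_lt_coe]
      linarith [hdom i hi hij]
  rw [hroot, hterm j hΛj, v.map_zero] at hval
  exact WithTop.top_ne_coe hval

theorem stmt_8_general (Fq : Type) [Field Fq] [Fintype Fq]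
    (C : Type) [Field C]
    (φL : LaurentSeries Fq →+* C) (abv : AbsoluteValue C ℝ)
    (hcomp : ∀ f : LaurentSeries Fq, f ≠ 0 → abv (φL f) = (Fintype.card Fq : ℝ) ^ (-f.order))
    (n : ℕ) (hn : 3 ≤ n) (Λ : Polynomial (Polynomial Fq))
    (hmon : Λ.Monic) (hdeg : Λ.natDegree = n)
    (hmax : ∀ i < n, i ≠ n - 2 → pabs Fq (Λ.coeff i) ≤ pabs Fq (Λ.coeff (n - 2)))
    (hge : 2 * (Λ.coeff (n - 1)).natDegree ≤ (Λ.coeff (n - 2)).natDegree)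
    (hodd : Odd (Λ.coeff (n - 2)).natDegree) :
    ∀ x : LaurentSeries Fq,
      (Λ.map (φL.comp (polyEmb Fq))).eval (φL x) = 0 → ¬ (1 < abv (φL x)) := by
  intro x hx hgt
  obtain ⟨k, rfl⟩ : ∃ k, n = k + 2 := ⟨n - 2, by omega⟩
  rw [show k + 2 - 1 = k + 1 by omega, Nat.add_sub_cancel] at hge
  rw [Nat.add_sub_cancel] at hmax hodd
  have hx0 : x ≠ 0 := by
    rintro rfl
    norm_num at hgt
  have hd : 0 < -x.order := by
    rw [hcomp x hx0] at hgt
    exact (one_lt_zpow_iff_right₀ (by exact_mod_cast Fintype.one_lt_card)).mp hgt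
  have hroot : (Λ.map (polyEmb Fq)).eval x = 0 :=
    φL.injective (by rwa [map_zero, ← eval₂_at_apply, ← eval_map, map_map])
  have hk : Λ.coeff k ≠ 0 := fun h => by simp [h] at hodd
  have hD : ∀ i < k + 2, (Λ.coeff i).natDegree ≤ (Λ.coeff k).natDegree := fun i hi => by
    rcases eq_or_ne i k with rfl | hik
    · exact le_rfl
    · exact natDegree_le_of_pabs_le hk (hmax i hi hik)
  have hlead : Λ.coeff (k + 2) = 1 := hdeg ▸ hmon.coeff_natDegree
  have hDtop : (Λ.coeff (k + 2)).natDegree = 0 := by rw [hlead, natDegree_one]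
  have hslope : 2 * -x.order ≠ (Λ.coeff k).natDegree := by
    obtain ⟨t, ht⟩ := hodd
    omega
  rcases hslope.lt_or_gt with hslope | hslope
  · exact eval_map_polyEmb_ne_zero hx0 (by omega) (by omega) hk
      (dominates_middle_of_two_mul_lt hd hD hge hDtop hslope) hroot
  · exact eval_map_polyEmb_ne_zero hx0 (by omega) (by omega) (by simp [hlead])
      (dominates_top_of_lt_two_mul hd hD hge hDtop hslope) hroot

theorem stmt_8 (Fq : Type) [Field Fq] [Fintype Fq]
    (C : Type) [Field C] [IsAlgClosed C]
    (φL : LaurentSeries Fq →+* C) (abv : AbsoluteValue C ℝ)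
    (hna : ∀ x y : C, abv (x + y) ≤ max (abv x) (abv y))
    (hcomp : ∀ f : LaurentSeries Fq, f ≠ 0 → abv (φL f) = (Fintype.card Fq : ℝ) ^ (-f.order))
    (n : ℕ) (hn : 3 ≤ n) (Λ : Polynomial (Polynomial Fq))
    (hmon : Λ.Monic) (hdeg : Λ.natDegree = n) (h0 : Λ.coeff 0 ≠ 0)
    (hmax : ∀ i < n, i ≠ n - 2 → pabs Fq (Λ.coeff i) ≤ pabs Fq (Λ.coeff (n - 2)))
    (hatt : ∃ i, i < n ∧ i ≠ n - 2 ∧ pabs Fq (Λ.coeff i) = pabs Fq (Λ.coeff (n - 2)))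
    (hge : 2 * (Λ.coeff (n - 1)).natDegree ≤ (Λ.coeff (n - 2)).natDegree)
    (hodd : Odd (Λ.coeff (n - 2)).natDegree) :
    ∀ x : LaurentSeries Fq,
      (Λ.map (φL.comp (polyEmb Fq))).eval (φL x) = 0 → ¬ (1 < abv (φL x)) :=
  stmt_8_general Fq C φL abv hcomp n hn Λ hmon hdeg hmax hge hodd
end

section
/- Let n ≥ 3 and Λ(Y) = Yⁿ + λ_{n-1}Y^{n-1} + … + λ₀ ∈ F_q[X][Y]. Suppose Λ has no root in F_q, max_{i < n-3} deg λ_i < deg λ_{n-3} = deg λ_{n-2} ≥ 2·deg λ_{n-1}, and deg λ_{n-2} is odd. Then Λ is irreducible over F_q[X]. -/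
open scoped Classical
set_option linter.unusedVariables false

/-!
For `p = ∑ λᵢ Yⁱ ∈ R[X][Y]` let its leading `X`-form be the leading coefficient of `p` after
swapping `X` and `Y`, i.e. the `Y`-polynomial collecting the top `X`-coefficients of those `λᵢ` of
maximal degree. It is multiplicative, so its `Y`-degree and `Y`-trailing degree are additive.

For a monic factorization `Λ = g h` with `m = deg λ_{n-2}` odd: after `X ↦ X²`, `Y ↦ Xᵐ Y` the
leading form of `Λ` is supported exactly on `{n-2, n}`. So each factor's form ends at its degree,
and the gap to its trailing index is even because `m` is odd; the gaps add to `2`, hence one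
factor, say `h`, has a coefficient of degree `m`. Since `X`-degrees add up to `deg_X Λ = m`, the
other factor `g` has constant coefficients. The plain leading form of `Λ` is supported on
`{n-3, n-2}`, which forces `deg g ≤ 1`, and a linear `g ∈ F_q[Y]` gives a root of `Λ` in `F_q`.
-/

open Polynomial Polynomial.Bivariate

section Swap

variable {R : Type*} [CommSemiring R]

theorem coeff_coeff_swap (p : R[X][X]) (i j : ℕ) :
    ((swap p).coeff j).coeff i = (p.coeff i).coeff j := by
  induction p using Polynomial.induction_on' with
  | add p q hp hq => simp [hp, hq]
  | monomial n a =>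
    induction a using Polynomial.induction_on' with
    | add a b ha hb => simp only [(monomial n).map_add, map_add, coeff_add, ha, hb]
    | monomial k r =>
      rw [swap_monomial_monomial]
      simp only [coeff_monomial]
      split_ifs <;> simp_all [coeff_monomial]

theorem natDegree_coeff_le_natDegree_swap (p : R[X][X]) (i : ℕ) :
    (p.coeff i).natDegree ≤ (swap p).natDegree := by
  by_cases hi : p.coeff i = 0
  · simp [hi]
  · refine le_natDegree_of_ne_zero fun h => hi (leadingCoeff_eq_zero.mp ?_)
    rw [leadingCoeff, ← coeff_coeff_swap, h, coeff_zero]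

theorem coeff_leadingCoeff_swap_ne_zero_iff {p : R[X][X]} {i : ℕ} :
    (swap p).leadingCoeff.coeff i ≠ 0 ↔
      p.coeff i ≠ 0 ∧ (p.coeff i).natDegree = (swap p).natDegree := by
  rw [leadingCoeff, coeff_coeff_swap]
  refine ⟨fun h => ⟨fun h0 => by simp [h0] at h, ?_⟩, fun ⟨hi, hdeg⟩ => ?_⟩
  · exact (natDegree_coeff_le_natDegree_swap p i).antisymm (le_natDegree_of_ne_zero h)
  · rwa [← hdeg, ← leadingCoeff, Ne, leadingCoeff_eq_zero]

theorem natDegree_coeff_eq_zero_of_natDegree_le {p : R[X][X]} (hp : p.Monic) {i : ℕ}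
    (hi : p.natDegree ≤ i) : (p.coeff i).natDegree = 0 := by
  rcases hi.eq_or_lt with rfl | hi
  · rw [hp.coeff_natDegree, natDegree_one]
  · rw [coeff_eq_zero_of_natDegree_lt hi, natDegree_zero]

variable {p : R[X][X]} {a b D : ℕ}

theorem natDegree_swap_eq (hle : ∀ i, (p.coeff i).natDegree ≤ D)
    (haD : (p.coeff a).natDegree = D) : (swap p).natDegree = D := by
  refine le_antisymm ?_ (haD ▸ natDegree_coeff_le_natDegree_swap p a)
  refine natDegree_le_iff_coeff_eq_zero.2 fun j hj => ?_
  ext i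
  rw [coeff_coeff_swap, coeff_zero]
  exact coeff_eq_zero_of_natDegree_lt ((hle i).trans_lt hj)

theorem natTrailingDegree_leadingCoeff_swap_eq (hle : ∀ i, (p.coeff i).natDegree ≤ D)
    (ha : p.coeff a ≠ 0) (haD : (p.coeff a).natDegree = D)
    (hlt : ∀ i < a, p.coeff i ≠ 0 → (p.coeff i).natDegree < D) :
    (swap p).leadingCoeff.natTrailingDegree = a := by
  have hD := natDegree_swap_eq hle haD
  have ha' := coeff_leadingCoeff_swap_ne_zero_iff.2 ⟨ha, haD.trans hD.symm⟩
  refine (natTrailingDegree_le_of_ne_zero ha').antisymm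
    (le_natTrailingDegree (fun h => by simp [h] at ha') fun i hi => ?_)
  by_contra h
  obtain ⟨hi0, hiD⟩ := coeff_leadingCoeff_swap_ne_zero_iff.1 h
  exact (hlt i hi hi0).ne (hiD.trans hD)

theorem natDegree_leadingCoeff_swap_eq (hle : ∀ i, (p.coeff i).natDegree ≤ D)
    (hb : p.coeff b ≠ 0) (hbD : (p.coeff b).natDegree = D)
    (hlt : ∀ i, b < i → p.coeff i ≠ 0 → (p.coeff i).natDegree < D) :
    (swap p).leadingCoeff.natDegree = b := by
  have hD := natDegree_swap_eq hle hbD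
  refine natDegree_eq_of_le_of_coeff_ne_zero (natDegree_le_iff_coeff_eq_zero.2 fun i hi => ?_)
    (coeff_leadingCoeff_swap_ne_zero_iff.2 ⟨hb, hbD.trans hD.symm⟩)
  by_contra h
  obtain ⟨hi0, hiD⟩ := coeff_leadingCoeff_swap_ne_zero_iff.1 h
  exact (hlt i hi hi0).ne (hiD.trans hD)

end Swap

section WeightedSubst

variable {R : Type*} [CommSemiring R]

/-- `X ↦ X²` in the coefficients and `Y ↦ Xᵐ Y`, so that the `i`-th coefficient gets `X`-degree
`2 deg λᵢ + m i`: the leading `X`-form of the image sees the slope-`m/2` edge of the Newton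
polygon of `p`. -/
noncomputable def weightedSubst (m : ℕ) : R[X][X] →+* R[X][X] :=
  (compRingHom (C (X ^ m) * X)).comp (mapRingHom (expand R 2))

theorem coeff_weightedSubst (m : ℕ) (p : R[X][X]) (i : ℕ) :
    (weightedSubst m p).coeff i = expand R 2 (p.coeff i) * X ^ (m * i) := by
  rw [weightedSubst, RingHom.comp_apply, coe_compRingHom_apply, comp_C_mul_X_coeff,
    coe_mapRingHom, coeff_map, pow_mul]
  rfl

theorem coeff_weightedSubst_eq_zero_iff {m : ℕ} {p : R[X][X]} {i : ℕ} :
    (weightedSubst m p).coeff i = 0 ↔ p.coeff i = 0 := by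
  rw [coeff_weightedSubst]
  exact ⟨fun h => (expand_eq_zero two_pos).1 (mul_X_pow_eq_zero h), fun h => by simp [h]⟩

theorem natDegree_coeff_weightedSubst [Nontrivial R] (m : ℕ) {p : R[X][X]} {i : ℕ}
    (hi : p.coeff i ≠ 0) :
    ((weightedSubst m p).coeff i).natDegree = 2 * (p.coeff i).natDegree + m * i := by
  rw [coeff_weightedSubst, natDegree_mul_X_pow _ ((expand_ne_zero two_pos).2 hi), natDegree_expand,
    mul_comm 2]

theorem natDegree_leadingCoeff_swap_weightedSubst_le (m : ℕ) (p : R[X][X]) :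
    (swap (weightedSubst m p)).leadingCoeff.natDegree ≤ p.natDegree := by
  refine natDegree_le_iff_coeff_eq_zero.2 fun i hi => ?_
  by_contra h
  exact coeff_weightedSubst_eq_zero_iff.not.1 (coeff_leadingCoeff_swap_ne_zero_iff.1 h).1
    (coeff_eq_zero_of_natDegree_lt hi)

theorem weightedSubst_ne_zero {m : ℕ} {p : R[X][X]} (hp : p ≠ 0) : weightedSubst m p ≠ 0 := by
  intro h
  refine hp (ext fun i => ?_)
  rw [coeff_zero, ← coeff_weightedSubst_eq_zero_iff (m := m), h, coeff_zero]

end WeightedSubst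

theorem le_or_le_of_odd_of_gaps {m a b t u r s : ℕ} (hm : Odd m)
    (ha : 2 * a + m * t = m * r) (hb : 2 * b + m * u = m * s) (ht : t ≤ r) (hu : u ≤ s)
    (hsum : t + u + 2 = r + s) : m ≤ a ∨ m ≤ b := by
  obtain ⟨j, rfl⟩ := hm
  obtain ⟨c, rfl⟩ := Nat.exists_eq_add_of_le ht
  obtain ⟨d, rfl⟩ := Nat.exists_eq_add_of_le hu
  simp only [mul_add] at ha hb
  rcases (show c = 0 ∧ d = 2 ∨ c = 1 ∧ d = 1 ∨ c = 2 ∧ d = 0 by omega) with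
    ⟨rfl, rfl⟩ | ⟨rfl, rfl⟩ | ⟨rfl, rfl⟩ <;> omega

section Factorization

variable {R : Type*} [CommRing R] [IsDomain R] {m : ℕ}

theorem two_mul_natDegree_coeff_add_mul_eq {g : R[X][X]} (hg : g.Monic) {t : ℕ}
    (hdeg : (swap (weightedSubst m g)).leadingCoeff.natDegree = g.natDegree)
    (ht : (swap (weightedSubst m g)).leadingCoeff.natTrailingDegree = t) :
    2 * (g.coeff t).natDegree + m * t = m * g.natDegree := by
  set G := (swap (weightedSubst m g)).leadingCoeff
  have hG : G ≠ 0 := leadingCoeff_ne_zero.2 <|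
    (map_ne_zero_iff _ swap.injective).2 (weightedSubst_ne_zero hg.ne_zero)
  have hGtop : G.coeff g.natDegree ≠ 0 := by rw [← hdeg]; exact leadingCoeff_ne_zero.2 hG
  have hGbot : G.coeff t ≠ 0 := by rw [← ht]; exact trailingCoeff_nonzero_iff_nonzero.2 hG
  obtain ⟨-, htop⟩ := coeff_leadingCoeff_swap_ne_zero_iff.1 hGtop
  obtain ⟨hbot0, hbot⟩ := coeff_leadingCoeff_swap_ne_zero_iff.1 hGbot
  rw [natDegree_coeff_weightedSubst m (coeff_weightedSubst_eq_zero_iff.not.1 hbot0)] at hbot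
  rw [natDegree_coeff_weightedSubst m (hg.coeff_natDegree ▸ one_ne_zero), hg.coeff_natDegree,
    natDegree_one] at htop
  omega

theorem le_natDegree_swap_of_mul_eq (hm : Odd m) {Λ g h : R[X][X]} (hg : g.Monic)
    (hh : h.Monic) (hgh : g * h = Λ)
    (htop : (swap (weightedSubst m Λ)).leadingCoeff.natDegree = Λ.natDegree)
    (hbot : (swap (weightedSubst m Λ)).leadingCoeff.natTrailingDegree + 2 = Λ.natDegree) :
    m ≤ (swap g).natDegree ∨ m ≤ (swap h).natDegree := by
  set G := (swap (weightedSubst m g)).leadingCoeff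
  set H := (swap (weightedSubst m h)).leadingCoeff
  have hG : G ≠ 0 := leadingCoeff_ne_zero.2 <|
    (map_ne_zero_iff _ swap.injective).2 (weightedSubst_ne_zero hg.ne_zero)
  have hH : H ≠ 0 := leadingCoeff_ne_zero.2 <|
    (map_ne_zero_iff _ swap.injective).2 (weightedSubst_ne_zero hh.ne_zero)
  have hmul : (swap (weightedSubst m Λ)).leadingCoeff = G * H := by
    rw [← hgh, map_mul, map_mul, leadingCoeff_mul]
  rw [hmul, natDegree_mul hG hH, ← hgh, hg.natDegree_mul hh] at htop
  rw [hmul, natTrailingDegree_mul hG hH, ← hgh, hg.natDegree_mul hh] at hbot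
  have hGle : G.natDegree ≤ g.natDegree := natDegree_leadingCoeff_swap_weightedSubst_le m g
  have hHle : H.natDegree ≤ h.natDegree := natDegree_leadingCoeff_swap_weightedSubst_le m h
  have hGdeg : G.natDegree = g.natDegree := by omega
  have hHdeg : H.natDegree = h.natDegree := by omega
  refine (le_or_le_of_odd_of_gaps hm (two_mul_natDegree_coeff_add_mul_eq hg hGdeg rfl)
    (two_mul_natDegree_coeff_add_mul_eq hh hHdeg rfl) (hGdeg ▸ natTrailingDegree_le_natDegree G)
    (hHdeg ▸ natTrailingDegree_le_natDegree H) hbot).imp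
    (fun h' => h'.trans (natDegree_coeff_le_natDegree_swap g _))
    (fun h' => h'.trans (natDegree_coeff_le_natDegree_swap h _))

theorem exists_eval_C_eq_zero_of_mul_eq {Λ g h : R[X][X]} (hg : g.Monic) (hh : h ≠ 0)
    (hgh : g * h = Λ) (hg1 : g.natDegree ≠ 0) (hgX : (swap g).natDegree = 0)
    (hΛ0 : Λ.coeff 0 ≠ 0)
    (hΛ : (swap Λ).leadingCoeff.natDegree ≤ (swap Λ).leadingCoeff.natTrailingDegree + 1) :
    ∃ c : R, Λ.eval (C c) = 0 := by
  have hconst : ∀ i, (g.coeff i).natDegree = 0 := fun i =>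
    Nat.le_zero.1 (hgX ▸ natDegree_coeff_le_natDegree_swap g i)
  set G := (swap g).leadingCoeff
  set H := (swap h).leadingCoeff
  have hg0 : g.coeff 0 ≠ 0 := by
    rw [← hgh, mul_coeff_zero] at hΛ0; exact left_ne_zero_of_mul hΛ0
  have hG0 : G.coeff 0 ≠ 0 :=
    coeff_leadingCoeff_swap_ne_zero_iff.2 ⟨hg0, (hconst 0).trans hgX.symm⟩
  have hGr : G.coeff g.natDegree ≠ 0 := coeff_leadingCoeff_swap_ne_zero_iff.2
    ⟨hg.coeff_natDegree ▸ one_ne_zero, (hconst _).trans hgX.symm⟩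
  have hG : G ≠ 0 := fun h0 => hG0 (by rw [h0, coeff_zero])
  have hH : H ≠ 0 := leadingCoeff_ne_zero.2 ((map_ne_zero_iff _ swap.injective).2 hh)
  have hmul : (swap Λ).leadingCoeff = G * H := by rw [← hgh, map_mul, leadingCoeff_mul]
  rw [hmul, natDegree_mul hG hH, natTrailingDegree_mul hG hH] at hΛ
  have hGdeg : g.natDegree ≤ G.natDegree := le_natDegree_of_ne_zero hGr
  have hGtr : G.natTrailingDegree ≤ 0 := natTrailingDegree_le_of_ne_zero hG0
  have hHtr : H.natTrailingDegree ≤ H.natDegree := natTrailingDegree_le_natDegree H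
  have hr : g.natDegree = 1 := by omega
  set a := (g.coeff 0).coeff 0
  have ha : g.coeff 0 = C a := eq_C_of_natDegree_eq_zero (hconst 0)
  refine ⟨-a, ?_⟩
  rw [← hgh, eval_mul, hg.eq_X_add_C hr, ha]
  simp

end Factorization

/-- The hypotheses of the theorem on `Λ = ∑ λᵢ Yⁱ`, written with `n = k + 3` and
`m = deg λ_{n-2}`; the strict `2 deg λ_{n-1} < m` follows from `≤` since `m` is odd. -/
structure DegreeShape {R : Type*} [CommSemiring R] (Λ : R[X][X]) (k m : ℕ) : Prop where
  monic : Λ.Monic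
  natDegree_eq : Λ.natDegree = k + 3
  natDegree_coeff_lt : ∀ i < k, (Λ.coeff i).natDegree < m
  natDegree_coeff_k : (Λ.coeff k).natDegree = m
  natDegree_coeff_k_add_one : (Λ.coeff (k + 1)).natDegree = m
  two_mul_natDegree_coeff_k_add_two_lt : 2 * (Λ.coeff (k + 2)).natDegree < m

namespace DegreeShape

variable {R : Type*} [CommSemiring R] {Λ : R[X][X]} {k m : ℕ}

theorem pos (hΛ : DegreeShape Λ k m) : 0 < m := by
  have := hΛ.two_mul_natDegree_coeff_k_add_two_lt
  omega

theorem coeff_k_add_one_ne_zero (hΛ : DegreeShape Λ k m) : Λ.coeff (k + 1) ≠ 0 :=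
  ne_zero_of_natDegree_gt (hΛ.natDegree_coeff_k_add_one ▸ hΛ.pos)

theorem natDegree_coeff_lt_of_lt (hΛ : DegreeShape Λ k m) {i : ℕ} (hi : k + 1 < i) :
    (Λ.coeff i).natDegree < m := by
  rcases (show i = k + 2 ∨ k + 3 ≤ i by omega) with rfl | hi
  · have := hΛ.two_mul_natDegree_coeff_k_add_two_lt
    omega
  · rw [natDegree_coeff_eq_zero_of_natDegree_le hΛ.monic (hΛ.natDegree_eq ▸ hi)]
    exact hΛ.pos

theorem natDegree_coeff_le (hΛ : DegreeShape Λ k m) (i : ℕ) : (Λ.coeff i).natDegree ≤ m := by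
  rcases (show i < k ∨ i = k ∨ i = k + 1 ∨ k + 1 < i by omega) with hi | rfl | rfl | hi
  exacts [(hΛ.natDegree_coeff_lt i hi).le, hΛ.natDegree_coeff_k.le,
    hΛ.natDegree_coeff_k_add_one.le, (hΛ.natDegree_coeff_lt_of_lt hi).le]

theorem natDegree_swap (hΛ : DegreeShape Λ k m) : (swap Λ).natDegree = m :=
  natDegree_swap_eq hΛ.natDegree_coeff_le hΛ.natDegree_coeff_k

theorem natDegree_leadingCoeff_swap_le (hΛ : DegreeShape Λ k m) :
    (swap Λ).leadingCoeff.natDegree ≤ (swap Λ).leadingCoeff.natTrailingDegree + 1 := by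
  rw [natDegree_leadingCoeff_swap_eq hΛ.natDegree_coeff_le hΛ.coeff_k_add_one_ne_zero
      hΛ.natDegree_coeff_k_add_one fun i hi _ => hΛ.natDegree_coeff_lt_of_lt hi,
    natTrailingDegree_leadingCoeff_swap_eq hΛ.natDegree_coeff_le
      (ne_zero_of_natDegree_gt (hΛ.natDegree_coeff_k ▸ hΛ.pos)) hΛ.natDegree_coeff_k
      fun i hi _ => hΛ.natDegree_coeff_lt i hi]

theorem leadingCoeff_swap_weightedSubst [Nontrivial R] (hΛ : DegreeShape Λ k m) :
    (swap (weightedSubst m Λ)).leadingCoeff.natTrailingDegree + 2 = Λ.natDegree ∧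
      (swap (weightedSubst m Λ)).leadingCoeff.natDegree = Λ.natDegree := by
  have hk1 := hΛ.coeff_k_add_one_ne_zero
  obtain ⟨hmon, hdeg, hlow, hk, hk1m, hk2⟩ := hΛ
  have hk3 : Λ.coeff (k + 3) ≠ 0 := by rw [← hdeg, hmon.coeff_natDegree]; exact one_ne_zero
  have hne : ∀ {i}, (weightedSubst m Λ).coeff i ≠ 0 → Λ.coeff i ≠ 0 :=
    coeff_weightedSubst_eq_zero_iff.not.1
  have hk1w : ((weightedSubst m Λ).coeff (k + 1)).natDegree = m * (k + 3) := by
    rw [natDegree_coeff_weightedSubst m hk1, hk1m]; ring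
  have hk3w : ((weightedSubst m Λ).coeff (k + 3)).natDegree = m * (k + 3) := by
    rw [natDegree_coeff_weightedSubst m hk3, ← hdeg, hmon.coeff_natDegree, natDegree_one]; ring
  have hlt : ∀ i, Λ.coeff i ≠ 0 → i ≠ k + 1 → i ≠ k + 3 →
      ((weightedSubst m Λ).coeff i).natDegree < m * (k + 3) := by
    intro i hi hi1 hi3
    rw [natDegree_coeff_weightedSubst m hi]
    have : i ≤ k + 3 := hdeg ▸ le_natDegree_of_ne_zero hi
    rcases (show i < k ∨ i = k ∨ i = k + 2 by omega) with hik | rfl | rfl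
    · have := hlow i hik
      have : m * i ≤ m * k := Nat.mul_le_mul_left m hik.le
      nlinarith
    all_goals nlinarith
  have hle : ∀ i, ((weightedSubst m Λ).coeff i).natDegree ≤ m * (k + 3) := by
    intro i
    by_cases hi : Λ.coeff i = 0
    · simp [coeff_weightedSubst_eq_zero_iff.2 hi]
    rcases eq_or_ne i (k + 1) with rfl | hi1
    · exact hk1w.le
    rcases eq_or_ne i (k + 3) with rfl | hi3
    · exact hk3w.le
    exact (hlt i hi hi1 hi3).le
  rw [hdeg, natTrailingDegree_leadingCoeff_swap_eq hle
      (coeff_weightedSubst_eq_zero_iff.not.2 hk1) hk1w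
      fun i hi h0 => hlt i (hne h0) (by omega) (by omega),
    natDegree_leadingCoeff_swap_eq hle (coeff_weightedSubst_eq_zero_iff.not.2 hk3) hk3w
      fun i hi h0 => absurd (le_natDegree_of_ne_zero (hne h0)) (by omega)]
  exact ⟨rfl, rfl⟩

end DegreeShape

theorem DegreeShape.irreducible {R : Type*} [CommRing R] [IsDomain R] {Λ : R[X][X]} {k m : ℕ}
    (hΛ : DegreeShape Λ k m) (hm : Odd m) (hroot : ∀ c : R, Λ.eval (C c) ≠ 0) :
    Irreducible Λ := by
  have hΛ0 : Λ.coeff 0 ≠ 0 := by simpa [coeff_zero_eq_eval_zero] using hroot 0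
  obtain ⟨hΦbot, hΦtop⟩ := hΛ.leadingCoeff_swap_weightedSubst
  refine hΛ.monic.irreducible_iff_natDegree.2
    ⟨fun h1 => by simpa [h1] using hΛ.natDegree_eq, fun g h hg hh hgh => ?_⟩
  by_contra! hpos
  have hX : (swap g).natDegree + (swap h).natDegree = m := by
    rw [← hΛ.natDegree_swap, ← hgh, map_mul, natDegree_mul
      ((map_ne_zero_iff _ swap.injective).2 hg.ne_zero)
      ((map_ne_zero_iff _ swap.injective).2 hh.ne_zero)]
  rcases le_natDegree_swap_of_mul_eq hm hg hh hgh hΦtop hΦbot with hgm | hhm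
  · obtain ⟨c, hc⟩ := exists_eval_C_eq_zero_of_mul_eq hh hg.ne_zero ((mul_comm h g).trans hgh)
      hpos.2 (by omega) hΛ0 hΛ.natDegree_leadingCoeff_swap_le
    exact hroot c hc
  · obtain ⟨c, hc⟩ := exists_eval_C_eq_zero_of_mul_eq hg hh.ne_zero hgh hpos.1 (by omega) hΛ0
      hΛ.natDegree_leadingCoeff_swap_le
    exact hroot c hc

theorem natDegree_lt_of_pabs_lt {Fq : Type} [Field Fq] [Fintype Fq] {p q : Fq[X]} (hp : p ≠ 0)
    (hq : q ≠ 0) (h : pabs Fq p < pabs Fq q) : p.natDegree < q.natDegree := by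
  rw [pabs, pabs, if_neg hp, if_neg hq] at h
  exact (pow_lt_pow_iff_right₀ (by exact_mod_cast Fintype.one_lt_card)).1 h

theorem stmt_15_general (Fq : Type) [Field Fq] [Fintype Fq]
    (n : ℕ) (hn : 3 ≤ n) (Λ : Polynomial (Polynomial Fq))
    (hmon : Λ.Monic) (hdeg : Λ.natDegree = n)
    (hnoroot : ∀ c : Fq, Λ.eval (Polynomial.C c) ≠ 0)
    (hmax : ∀ i < n - 3, pabs Fq (Λ.coeff i) < pabs Fq (Λ.coeff (n - 3)))
    (hne3 : Λ.coeff (n - 3) ≠ 0)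
    (heq : (Λ.coeff (n - 3)).natDegree = (Λ.coeff (n - 2)).natDegree)
    (hge : 2 * (Λ.coeff (n - 1)).natDegree ≤ (Λ.coeff (n - 2)).natDegree)
    (hodd : Odd (Λ.coeff (n - 2)).natDegree) :
    Irreducible Λ := by
  obtain ⟨k, rfl⟩ := Nat.exists_eq_add_of_le' hn
  simp only [Nat.add_sub_cancel, show k + 3 - 2 = k + 1 by omega,
    show k + 3 - 1 = k + 2 by omega] at hmax hne3 heq hge hodd
  refine DegreeShape.irreducible ⟨hmon, hdeg, fun i hi => ?_, heq, rfl, ?_⟩ hodd hnoroot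
  · by_cases h0 : Λ.coeff i = 0
    · rw [h0, natDegree_zero]; exact hodd.pos
    · exact heq ▸ natDegree_lt_of_pabs_lt h0 hne3 (hmax i hi)
  · exact hge.lt_of_ne fun h => Nat.not_even_iff_odd.2 hodd (h ▸ even_two_mul _)

theorem stmt_15 (Fq : Type) [Field Fq] [Fintype Fq]
    (n : ℕ) (hn : 3 ≤ n) (Λ : Polynomial (Polynomial Fq))
    (hmon : Λ.Monic) (hdeg : Λ.natDegree = n)
    (hnoroot : ∀ c : Fq, Λ.eval (Polynomial.C c) ≠ 0)
    (hmax : ∀ i < n - 3, pabs Fq (Λ.coeff i) < pabs Fq (Λ.coeff (n - 3)))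
    (hne3 : Λ.coeff (n - 3) ≠ 0) (hne2 : Λ.coeff (n - 2) ≠ 0)
    (heq : (Λ.coeff (n - 3)).natDegree = (Λ.coeff (n - 2)).natDegree)
    (hge : 2 * (Λ.coeff (n - 1)).natDegree ≤ (Λ.coeff (n - 2)).natDegree)
    (hodd : Odd (Λ.coeff (n - 2)).natDegree) :
    Irreducible Λ :=
  stmt_15_general Fq n hn Λ hmon hdeg hnoroot hmax hne3 heq hge hodd
end

section
/- The polynomial Λ(Y) = Y³ + (X+1)Y² + (X⁴+X³)Y + X⁴+X³+X²+X+1 over F₂[X] is irreducible, and its roots ω₁, ω₂, ω₃ satisfy: ω₁, ω₂ ∈ F₂((X^{-1})) with |ω₁| = |ω₂| = 2² > 1, and |ω₃| = 1; hence (ω₁, ω₂) is a 2-Salem element lying in F₂((X^{-1})). -/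
open scoped Classical
set_option linter.unusedVariables false

/-!
Putting `Y = X² Z` and `t = X⁻¹` turns `Λ` into the monic cubic
`P(Z) = Z³ + (t + t²) Z² + (1 + t) Z + t² (1 + t + t² + t³ + t⁴)` over `𝔽₂⟦t⟧`, which reduces to
`Z (Z + 1)²` modulo `t`. Hensel's lemma lifts the simple root `0` to a root `t² e` with `e` a unit.
The double root `1` is split by writing `Z = 1 + t V`: after dividing out `Z - t² e`, in
characteristic two `V` satisfies a monic quadratic whose reduction `V (V + 1)` has simple roots, so
Hensel applies again. Hence all three roots lie in `𝔽₂((X⁻¹))`: two are `X²` times a unit, of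
absolute value `2²`, and the third is the unit `e`, of absolute value `1`. Irreducibility follows
from `Λ ≡ Y³ + Y² + 1 (mod X)`, a cubic without roots in `𝔽₂`.
-/

open Polynomial

namespace PowerSeries

variable {R : Type*} [CommRing R]

instance (p : ℕ) [CharP R p] : CharP R⟦X⟧ p :=
  charP_of_injective_algebraMap (C_injective (R := R)) p

theorem exists_isRoot_constantCoeff_eq {f : R⟦X⟧[X]} (hf : f.Monic) {a₀ : R⟦X⟧}
    (h₁ : constantCoeff (f.eval a₀) = 0) (h₂ : IsUnit (constantCoeff (f.derivative.eval a₀))) :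
    ∃ a, f.IsRoot a ∧ constantCoeff a = constantCoeff a₀ := by
  obtain ⟨a, ha, hmem⟩ := HenselianRing.is_henselian (I := Ideal.span {X}) f hf a₀
    (by rwa [Ideal.mem_span_singleton, X_dvd_iff]) ((isUnit_iff_constantCoeff.mpr h₂).map _)
  refine ⟨a, ha, ?_⟩
  rwa [Ideal.mem_span_singleton, X_dvd_iff, map_sub, sub_eq_zero] at hmem

end PowerSeries

namespace HahnSeries

variable {R : Type*} [Semiring R]

theorem order_ofPowerSeries_eq_zero {z : PowerSeries R}
    (hz : PowerSeries.constantCoeff z ≠ 0) : (ofPowerSeries ℤ R z).order = 0 := by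
  have hcoeff : (ofPowerSeries ℤ R z).coeff 0 ≠ 0 := by
    simpa using (ofPowerSeries_apply_coeff z 0).trans_ne
      (by rwa [PowerSeries.coeff_zero_eq_constantCoeff_apply])
  refine le_antisymm (order_le_of_coeff_ne_zero hcoeff) ?_
  rw [le_order_iff_forall (ne_zero_of_coeff_ne_zero hcoeff), ofPowerSeries_apply]
  rintro j hj
  exact embDomain_of_notMem_range fun ⟨n, hn⟩ => hj.not_ge (hn ▸ Int.natCast_nonneg n)

theorem order_single_mul_ofPowerSeries {g : ℤ} {r : R} (hr : IsRegular r) {z : PowerSeries R}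
    (hz : PowerSeries.constantCoeff z ≠ 0) : (single g r * ofPowerSeries ℤ R z).order = g := by
  have hz' : ofPowerSeries ℤ R z ≠ 0 := by
    rw [Ne, map_eq_zero_iff _ ofPowerSeries_injective]
    rintro rfl
    simp at hz
  rw [order_single_mul_of_isRegular hr hz', order_ofPowerSeries_eq_zero hz, add_zero]

end HahnSeries

theorem Polynomial.roots_eq_of_nodup_of_natDegree_le {R : Type*} [CommRing R] [IsDomain R]
    {p : R[X]} {s : Multiset R} (hp : p ≠ 0) (hs : s.Nodup) (hroots : ∀ a ∈ s, p.IsRoot a)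
    (hdeg : p.natDegree ≤ Multiset.card s) : p.roots = s :=
  (Multiset.eq_of_le_of_card_le
    ((Multiset.le_iff_subset hs).2 fun a ha => (mem_roots hp).2 (hroots a ha))
    (p.card_roots'.trans hdeg)).symm

namespace SalemExample

open PowerSeries (constantCoeff)

local notation "O" => PowerSeries (ZMod 2)
local notation "t" => (PowerSeries.X : PowerSeries (ZMod 2))

noncomputable def cubic : (ZMod 2)[X][X] :=
  X ^ 3 + C (X + 1) * X ^ 2 + C (X ^ 4 + X ^ 3) * X + C (X ^ 4 + X ^ 3 + X ^ 2 + X + 1)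

noncomputable def cubicAtInfinity : O[X] :=
  X ^ 3 + C (t + t ^ 2) * X ^ 2 + C (1 + t) * X + C (t ^ 2 + t ^ 3 + t ^ 4 + t ^ 5 + t ^ 6)

theorem monic_cubic : cubic.Monic := by
  unfold cubic; monicity!

theorem natDegree_cubic : cubic.natDegree = 3 := by
  unfold cubic; compute_degree!

theorem eval_cubicAtInfinity (z : O) : cubicAtInfinity.eval z =
    z ^ 3 + (t + t ^ 2) * z ^ 2 + (1 + t) * z + (t ^ 2 + t ^ 3 + t ^ 4 + t ^ 5 + t ^ 6) := by
  simp [cubicAtInfinity]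

theorem irreducible_X_pow_three_add_X_sq_add_one :
    Irreducible (X ^ 3 + X ^ 2 + 1 : (ZMod 2)[X]) := by
  have hdeg : (X ^ 3 + X ^ 2 + 1 : (ZMod 2)[X]).natDegree = 3 := by compute_degree!
  rw [irreducible_iff_roots_eq_zero_of_degree_le_three (by omega) (by omega),
    Multiset.eq_zero_iff_forall_notMem]
  intro a ha
  rw [mem_roots (ne_zero_of_natDegree_gt (n := 0) (by omega))] at ha
  have hno_root : ∀ a : ZMod 2, a ^ 3 + a ^ 2 + 1 ≠ 0 := by decide
  exact hno_root a (by simpa using ha)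

theorem irreducible_cubic : Irreducible cubic := by
  refine Monic.irreducible_of_irreducible_map (evalRingHom 0) _ monic_cubic ?_
  convert irreducible_X_pow_three_add_X_sq_add_one
  simp [cubic]

theorem exists_isRoot_cubicAtInfinity_X_sq_mul :
    ∃ e : O, constantCoeff e = 1 ∧ cubicAtInfinity.IsRoot (t ^ 2 * e) := by
  obtain ⟨z, hz, hz₀⟩ := PowerSeries.exists_isRoot_constantCoeff_eq
    (f := cubicAtInfinity) (by unfold cubicAtInfinity; monicity!) (a₀ := 0)
    (by simp [cubicAtInfinity]) (by simp [cubicAtInfinity, derivative_pow])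
  set u : O := z ^ 2 + (t + t ^ 2) * z + (1 + t)
  have hu : constantCoeff u = 1 := by simp [u, hz₀]
  have hzu : z * u = -(t ^ 2 * (1 + t + t ^ 2 + t ^ 3 + t ^ 4)) := by
    rw [IsRoot, eval_cubicAtInfinity] at hz
    linear_combination hz
  refine ⟨-((1 + t + t ^ 2 + t ^ 3 + t ^ 4) * u⁻¹), ?_, ?_⟩
  · simp [hu]
  · convert hz using 1
    calc t ^ 2 * -((1 + t + t ^ 2 + t ^ 3 + t ^ 4) * u⁻¹) = z * u * u⁻¹ := by rw [hzu]; ring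
      _ = z := by rw [mul_assoc, PowerSeries.mul_inv_cancel _ (by simp [hu]), mul_one]

theorem exists_isRoot_cubicAtInfinity_one_add_X_mul {e : O} (he : constantCoeff e = 1)
    (hroot : cubicAtInfinity.IsRoot (t ^ 2 * e)) (b : ZMod 2) :
    ∃ V : O, constantCoeff V = b ∧ cubicAtInfinity.IsRoot (1 + t * V) := by
  obtain ⟨V, hV, hV₀⟩ := PowerSeries.exists_isRoot_constantCoeff_eq
    (f := X ^ 2 + C (1 + t + t * e) * X + C (1 + e + t * e + t ^ 2 * e + t ^ 2 * e ^ 2))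
    (by monicity!) (a₀ := PowerSeries.C b)
    (by simp [he]; decide +revert) (by simp [he, derivative_pow, map_ofNat]; decide +revert)
  refine ⟨V, by simpa using hV₀, ?_⟩
  -- `reduce_mod_char!` only finds the characteristic through a local hypothesis
  have : CharP O 2 := inferInstance
  rw [IsRoot, eval_cubicAtInfinity] at hroot ⊢
  simp only [IsRoot.def, eval_add, eval_mul, eval_pow, eval_X, eval_C, map_add, map_mul,
    map_pow] at hV
  -- `P(Z) = P(t² e) + (Z - t² e) q(Z)` with `q(1 + t V) = t² S(V)` in characteristic two,
  -- where `S` is the quadratic that `V` is a root of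
  linear_combination (norm := (ring_nf; reduce_mod_char!))
    hroot + (1 + t * V - t ^ 2 * e) * t ^ 2 * hV

local notation "K" => LaurentSeries (ZMod 2)

theorem polyEmb_X : polyEmb (ZMod 2) X = HahnSeries.single (-1) 1 := by
  simp [polyEmb]

theorem isRoot_map_polyEmb_cubic {z : O} (hz : cubicAtInfinity.IsRoot z) :
    (cubic.map (polyEmb (ZMod 2))).IsRoot
      (HahnSeries.single (-2) 1 * HahnSeries.ofPowerSeries ℤ (ZMod 2) z) := by
  set x : K := HahnSeries.single (-1) 1
  have hx : x ≠ 0 := HahnSeries.single_ne_zero one_ne_zero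
  have ht : HahnSeries.ofPowerSeries ℤ (ZMod 2) t = x⁻¹ := by
    refine eq_inv_of_mul_eq_one_right ?_
    simp [x, HahnSeries.single_mul_single]
  have hx2 : (HahnSeries.single (-2) 1 : K) = x ^ 2 := by
    simp [x, pow_two, HahnSeries.single_mul_single]
  have hz' := congrArg (HahnSeries.ofPowerSeries ℤ (ZMod 2)) hz
  rw [eval_cubicAtInfinity] at hz'
  simp only [map_add, map_mul, map_pow, map_one, map_zero, ht] at hz'
  simp only [cubic, IsRoot, Polynomial.map_add, Polynomial.map_mul, Polynomial.map_pow, map_X,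
    Polynomial.map_one, map_C, eval_add, eval_mul, eval_pow, eval_X, eval_C, eval_one, map_add,
    map_pow, map_one, polyEmb_X, hx2]
  field_simp at hz'
  linear_combination hz'

theorem exists_roots_map_polyEmb_cubic : ∃ w₁ w₂ w₃ : K,
    (cubic.map (polyEmb (ZMod 2))).roots = {w₁, w₂, w₃} ∧
      w₁.order = -2 ∧ w₂.order = -2 ∧ w₃ ≠ 0 ∧ w₃.order = 0 := by
  obtain ⟨e, he, h₃⟩ := exists_isRoot_cubicAtInfinity_X_sq_mul
  obtain ⟨V₁, hV₁, h₁⟩ := exists_isRoot_cubicAtInfinity_one_add_X_mul he h₃ 1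
  obtain ⟨V₂, hV₂, h₂⟩ := exists_isRoot_cubicAtInfinity_one_add_X_mul he h₃ 0
  set ι : O → K := fun z => HahnSeries.single (-2) 1 * HahnSeries.ofPowerSeries ℤ (ZMod 2) z
  have hι : Function.Injective ι :=
    (mul_right_injective₀ (HahnSeries.single_ne_zero one_ne_zero)).comp
      HahnSeries.ofPowerSeries_injective
  have hι₃ : ι (t ^ 2 * e) = HahnSeries.ofPowerSeries ℤ (ZMod 2) e := by
    simp [ι, ← mul_assoc, HahnSeries.single_mul_single]
  have ho : ∀ V : O, (ι (1 + t * V)).order = -2 := fun V =>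
    HahnSeries.order_single_mul_ofPowerSeries isRegular_one (by simp)
  have ho₃ : (HahnSeries.ofPowerSeries ℤ (ZMod 2) e).order = 0 :=
    HahnSeries.order_ofPowerSeries_eq_zero (by simp [he])
  have h₁₂ : 1 + t * V₁ ≠ 1 + t * V₂ := fun h => by
    simpa [hV₁, hV₂] using congrArg (PowerSeries.coeff 1) h
  refine ⟨ι (1 + t * V₁), ι (1 + t * V₂), HahnSeries.ofPowerSeries ℤ (ZMod 2) e, ?_, ho V₁, ho V₂,
    ?_, ho₃⟩
  · refine roots_eq_of_nodup_of_natDegree_le (monic_cubic.map _).ne_zero ?_ ?_ ?_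
    · have h₁₃ : ι (1 + t * V₁) ≠ HahnSeries.ofPowerSeries ℤ (ZMod 2) e := fun h => by
        simpa [h, ho₃] using ho V₁
      have h₂₃ : ι (1 + t * V₂) ≠ HahnSeries.ofPowerSeries ℤ (ZMod 2) e := fun h => by
        simpa [h, ho₃] using ho V₂
      simp [hι.ne h₁₂, h₁₃, h₂₃]
    · simp only [Multiset.insert_eq_cons, Multiset.mem_cons, Multiset.mem_singleton]
      rintro w (rfl | rfl | rfl)
      · exact isRoot_map_polyEmb_cubic h₁
      · exact isRoot_map_polyEmb_cubic h₂
      · exact hι₃ ▸ isRoot_map_polyEmb_cubic h₃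
    · simp [monic_cubic.natDegree_map, natDegree_cubic]
  · exact (map_ne_zero_iff _ HahnSeries.ofPowerSeries_injective).2 (by rintro rfl; simp at he)

end SalemExample

theorem stmt_17_general (C : Type) [Field C]
    (φL : LaurentSeries (ZMod 2) →+* C) (abv : AbsoluteValue C ℝ)
    (hcomp : ∀ f : LaurentSeries (ZMod 2), f ≠ 0 → abv (φL f) = (2 : ℝ) ^ (-f.order))
    (Λ : Polynomial (Polynomial (ZMod 2)))
    (hΛ : Λ = Polynomial.X ^ 3
      + Polynomial.C (Polynomial.X + 1) * Polynomial.X ^ 2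
      + Polynomial.C (Polynomial.X ^ 4 + Polynomial.X ^ 3) * Polynomial.X
      + Polynomial.C (Polynomial.X ^ 4 + Polynomial.X ^ 3 + Polynomial.X ^ 2
          + Polynomial.X + 1)) :
    Irreducible Λ ∧
    ∃ ω₁ ω₂ ω₃ : C,
      (Λ.map (φL.comp (polyEmb (ZMod 2)))).roots = {ω₁, ω₂, ω₃} ∧
      ω₁ ∈ Set.range φL ∧ ω₂ ∈ Set.range φL ∧
      abv ω₁ = 2 ^ 2 ∧ abv ω₂ = 2 ^ 2 ∧ 1 < abv ω₁ ∧ 1 < abv ω₂ ∧ abv ω₃ = 1 := by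
  obtain rfl : Λ = SalemExample.cubic := hΛ
  obtain ⟨w₁, w₂, w₃, hroots, ho₁, ho₂, hw₃, ho₃⟩ := SalemExample.exists_roots_map_polyEmb_cubic
  have habv : ∀ w : LaurentSeries (ZMod 2), w.order = -2 → abv (φL w) = 2 ^ 2 := fun w hw => by
    rw [hcomp w fun h => by simp [h] at hw, hw]
    norm_num
  refine ⟨SalemExample.irreducible_cubic, φL w₁, φL w₂, φL w₃, ?_, ⟨w₁, rfl⟩, ⟨w₂, rfl⟩,
    habv w₁ ho₁, habv w₂ ho₂, by norm_num [habv w₁ ho₁], by norm_num [habv w₂ ho₂], ?_⟩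
  · rw [← Polynomial.map_map, ← roots_map_of_injective_of_card_eq_natDegree φL.injective, hroots]
    · simp
    · simp [hroots, SalemExample.monic_cubic.natDegree_map, SalemExample.natDegree_cubic]
  · rw [hcomp w₃ hw₃, ho₃]
    norm_num

theorem stmt_17 (C : Type) [Field C] [IsAlgClosed C]
    (φL : LaurentSeries (ZMod 2) →+* C) (abv : AbsoluteValue C ℝ)
    (hna : ∀ x y : C, abv (x + y) ≤ max (abv x) (abv y))
    (hcomp : ∀ f : LaurentSeries (ZMod 2), f ≠ 0 → abv (φL f) = (2 : ℝ) ^ (-f.order))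
    (Λ : Polynomial (Polynomial (ZMod 2)))
    (hΛ : Λ = Polynomial.X ^ 3
      + Polynomial.C (Polynomial.X + 1) * Polynomial.X ^ 2
      + Polynomial.C (Polynomial.X ^ 4 + Polynomial.X ^ 3) * Polynomial.X
      + Polynomial.C (Polynomial.X ^ 4 + Polynomial.X ^ 3 + Polynomial.X ^ 2
          + Polynomial.X + 1)) :
    Irreducible Λ ∧
    ∃ ω₁ ω₂ ω₃ : C,
      (Λ.map (φL.comp (polyEmb (ZMod 2)))).roots = {ω₁, ω₂, ω₃} ∧
      ω₁ ∈ Set.range φL ∧ ω₂ ∈ Set.range φL ∧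
      abv ω₁ = 2 ^ 2 ∧ abv ω₂ = 2 ^ 2 ∧ 1 < abv ω₁ ∧ 1 < abv ω₂ ∧ abv ω₃ = 1 :=
  stmt_17_general C φL abv hcomp Λ hΛ
end

section
/- The polynomial Λ(Y) = Y³ + (X+1)Y² + X²Y − X² + 2 over F₃[X] is irreducible, and has two roots ω₁, ω₂ ∈ F₃((X^{-1})) of absolute value > 1 (of degrees 1 each) and one root ω₃ of absolute value exactly 1; hence (ω₁, ω₂) is a 2-Salem element lying in F₃((X^{-1})), even though deg λ₁ = 2·deg λ₂. -/
open scoped Classical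
set_option linter.unusedVariables false

/-!
Write `x` for the image of `X` in `F₃((X⁻¹))` and `u = x⁻¹`, so that `F₃[[u]] ⊂ F₃((X⁻¹))` is the
ring of integers. `Λ` is irreducible because its reduction at `X = 0`, `Y³ + Y² + 2`, has no root
in `F₃`. The substitution `Y = x + t` turns `u Λ(Y)` into `g(t) = u t³ + (1 + u) t² + 2t + 2u`,
whose reduction `t (t + 2)` has the simple roots `0` and `1`. As `g` is not monic, Hensel's lemma
is applied instead to `F(w) = w³ + u w² + 2(1 + u) w + 2u(1 + u)²`, obtained from `g` by
`w = (1 + u) t / (1 + t)`; its reduction `w³ - w` has only simple roots. This gives two roots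
`x + t₁`, `x + t₂` of `Λ` of absolute value `3`, and the third root
`-(x + 1) - (x + t₁) - (x + t₂) = -1 - t₁ - t₂` is a unit of `F₃[[u]]`, of absolute value `1`.
-/

open scoped PowerSeries

theorem ofNat_three_eq_zero {A : Type*} [Semiring A] [Algebra (ZMod 3) A] : (3 : A) = 0 := by
  rw [← map_ofNat (algebraMap (ZMod 3) A) 3, show (OfNat.ofNat 3 : ZMod 3) = 0 from rfl, map_zero]

theorem cubic_eval_neg_sub_sub_eq_zero {A : Type*} [CommRing A] [IsDomain A] {s t r a b : A}
    (hab : a ≠ b) (ha : a ^ 3 + s * a ^ 2 + t * a + r = 0)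
    (hb : b ^ 3 + s * b ^ 2 + t * b + r = 0) :
    (-s - a - b) ^ 3 + s * (-s - a - b) ^ 2 + t * (-s - a - b) + r = 0 := by
  have hq : a ^ 2 + a * b + b ^ 2 + s * (a + b) + t = 0 :=
    (mul_eq_zero.1 (by linear_combination ha - hb)).resolve_left (sub_ne_zero.2 hab)
  linear_combination ha + (-s - 2 * a - b) * hq

theorem Polynomial.roots_eq_of_natDegree_le_three {A : Type*} [CommRing A] [IsDomain A]
    {p : Polynomial A} (hp : p ≠ 0) (hdeg : p.natDegree ≤ 3) {a b c : A}
    (hab : a ≠ b) (hac : a ≠ c) (hbc : b ≠ c)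
    (ha : p.IsRoot a) (hb : p.IsRoot b) (hc : p.IsRoot c) : p.roots = {a, b, c} := by
  have hle : ({a, b, c} : Multiset A) ≤ p.roots := by
    refine (Multiset.le_iff_subset (by simp [hab, hac, hbc])).2 fun y hy => ?_
    simp only [Multiset.insert_eq_cons, Multiset.mem_cons, Multiset.mem_singleton] at hy
    rcases hy with rfl | rfl | rfl <;> exact (mem_roots hp).2 ‹_›
  exact (Multiset.eq_of_le_of_card_le hle ((p.card_roots').trans (by simpa using hdeg))).symm

section CharThree

variable {A : Type*} [CommRing A]

theorem salem_shift_identity (h3 : (3 : A) = 0) {x u : A} (hxu : x * u = 1) (t : A) :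
    u * ((x + t) ^ 3 + (x + 1) * (x + t) ^ 2 + x ^ 2 * (x + t) + (-x ^ 2 + 2)) =
      u * t ^ 3 + (1 + u) * t ^ 2 + 2 * t + 2 * u := by
  linear_combination (t ^ 2 + 2 * t) * hxu + u * (x ^ 3 + 2 * x ^ 2 * t + x * t ^ 2) * h3

theorem salem_moebius_identity (h3 : (3 : A) = 0) {u c t : A} (hc : c * (1 + t) = 1 + u) :
    (1 + t) * ((c * t) ^ 3 + u * (c * t) ^ 2 + 2 * (1 + u) * (c * t) + 2 * u * (1 + u) ^ 2) =
      c ^ 2 * (u * t ^ 3 + (1 + u) * t ^ 2 + 2 * t + 2 * u) := by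
  linear_combination (c ^ 2 * t ^ 3 - (1 + t) * (2 * c * t + 2 * u * (1 + u + c * (1 + t)))) * hc
    + c ^ 2 * ((u + 1) * t ^ 3 + (2 * u + 1) * t ^ 2 + 2 * u * t) * h3

end CharThree

namespace PowerSeries

theorem exists_isRoot_lift {k : Type*} [Field k] {f : Polynomial k⟦X⟧} (hf : f.Monic)
    (a₀ : k⟦X⟧) (h₀ : constantCoeff (f.eval a₀) = 0)
    (h₁ : constantCoeff (f.derivative.eval a₀) ≠ 0) :
    ∃ a, f.IsRoot a ∧ constantCoeff a = constantCoeff a₀ := by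
  have hunit : IsUnit (f.derivative.eval a₀) := isUnit_iff_constantCoeff.2 (Ne.isUnit h₁)
  obtain ⟨a, ha, haa₀⟩ := HenselianRing.is_henselian f hf a₀
    (Ideal.mem_span_singleton.2 (X_dvd_iff.2 h₀)) (hunit.map _)
  rw [Ideal.mem_span_singleton, X_dvd_iff, map_sub, sub_eq_zero] at haa₀
  exact ⟨a, ha, haa₀⟩

theorem exists_root_salemMonicCubic (b : ZMod 3) :
    ∃ w : (ZMod 3)⟦X⟧, w ^ 3 + X * w ^ 2 + 2 * (1 + X) * w + 2 * X * (1 + X) ^ 2 = 0 ∧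
      constantCoeff w = b := by
  let f : Polynomial (ZMod 3)⟦X⟧ := .X ^ 3 + .C X * .X ^ 2 + .C (2 * (1 + X)) * .X
      + .C (2 * X * (1 + X) ^ 2)
  have hf : f.Monic := by simp only [f]; monicity!
  -- modulo `X`, `f` reduces to `w³ - w`, which vanishes on `F₃` and has derivative `-1`
  obtain ⟨w, hw, hwb⟩ := exists_isRoot_lift hf (C b)
    (by simp [f, map_ofNat]; ring_nf; reduce_mod_char)
    (by simp [f, map_ofNat]; reduce_mod_char; decide)
  exact ⟨w, by simpa [f] using hw, by simpa using hwb⟩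

theorem exists_root_salemShiftedCubic {b : ZMod 3} (hb : b ≠ 1) :
    ∃ t : (ZMod 3)⟦X⟧, X * t ^ 3 + (1 + X) * t ^ 2 + 2 * t + 2 * X = 0 ∧
      constantCoeff t = b / (1 - b) := by
  obtain ⟨w, hw, hwb⟩ := exists_root_salemMonicCubic b
  set c := 1 + X - w
  have hc : constantCoeff c ≠ 0 := by simp [c, hwb, sub_eq_zero, Ne.symm hb]
  refine ⟨w * c⁻¹, ?_, by simp [hwb, c, div_eq_mul_inv]⟩
  have hct : c * (1 + w * c⁻¹) = 1 + X := by
    rw [mul_add, mul_one, mul_left_comm, PowerSeries.mul_inv_cancel c hc, mul_one]; ring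
  have h := salem_moebius_identity ofNat_three_eq_zero hct
  rw [mul_left_comm, PowerSeries.mul_inv_cancel c hc, mul_one, hw, mul_zero] at h
  exact (mul_eq_zero.1 h.symm).resolve_left (pow_ne_zero 2 fun h0 => hc (by simp [h0]))

end PowerSeries

namespace HahnSeries

theorem order_ofPowerSeries_eq_zero_s18 {R : Type*} [Semiring R] {f : R⟦X⟧}
    (hf : PowerSeries.constantCoeff f ≠ 0) : (ofPowerSeries ℤ R f).order = 0 := by
  have h0 : (ofPowerSeries ℤ R f).coeff 0 ≠ 0 := by simpa [PowerSeries.coeff_coe] using hf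
  refine le_antisymm (order_le_of_coeff_ne_zero h0) ?_
  exact (le_order_iff_forall (ne_zero_of_coeff_ne_zero h0)).2 fun j hj => by
    simp [PowerSeries.coeff_coe, hj]

theorem single_neg_one_mul_ofPowerSeries_X {R : Type*} [Semiring R] :
    single (-1 : ℤ) (1 : R) * ofPowerSeries ℤ R PowerSeries.X = 1 := by
  rw [ofPowerSeries_X, single_mul_single]; simp

theorem order_single_neg_one_add_ofPowerSeries {R : Type*} [Semiring R] [Nontrivial R]
    (t : R⟦X⟧) : (single (-1 : ℤ) (1 : R) + ofPowerSeries ℤ R t).order = -1 := by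
  have hcc : PowerSeries.constantCoeff (1 + PowerSeries.X * t) ≠ 0 := by simp
  have h : single (-1 : ℤ) (1 : R) + ofPowerSeries ℤ R t =
      single (-1) 1 * ofPowerSeries ℤ R (1 + PowerSeries.X * t) := by
    rw [map_add, (ofPowerSeries ℤ R).map_one, map_mul, mul_add, mul_one, ← mul_assoc,
      single_neg_one_mul_ofPowerSeries_X, one_mul]
  rw [h, order_single_mul_of_isRegular isRegular_one, order_ofPowerSeries_eq_zero_s18 hcc, add_zero]
  exact (map_ne_zero_iff _ ofPowerSeries_injective).2 fun h0 => hcc (by simp [h0])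

end HahnSeries

theorem polyEmb_X (Fq : Type) [Field Fq] :
    polyEmb Fq Polynomial.X = HahnSeries.single (-1) 1 := by
  simp [polyEmb]

open Polynomial in
noncomputable def salemCubic : Polynomial (Polynomial (ZMod 3)) :=
  X ^ 3 + C (X + 1) * X ^ 2 + C (X ^ 2) * X + C (-X ^ 2 + 2)

namespace salemCubic

open Polynomial

theorem monic : salemCubic.Monic := by unfold salemCubic; monicity!

theorem natDegree_eq : salemCubic.natDegree = 3 := by unfold salemCubic; compute_degree!

theorem irreducible : Irreducible salemCubic := by
  refine monic.irreducible_of_irreducible_map (evalRingHom 0) _ ?_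
  have hmap : salemCubic.map (evalRingHom 0) = X ^ 3 + X ^ 2 + 2 := by
    simp [salemCubic, map_ofNat]
  have hmonic : (X ^ 3 + X ^ 2 + 2 : (ZMod 3)[X]).Monic := by monicity!
  have hdeg : (X ^ 3 + X ^ 2 + 2 : (ZMod 3)[X]).natDegree = 3 := by compute_degree!
  rw [hmap, hmonic.irreducible_iff_roots_eq_zero_of_degree_le_three (by omega) (by omega)]
  refine Multiset.eq_zero_of_forall_notMem fun a ha => ?_
  have hno : ∀ b : ZMod 3, b ^ 3 + b ^ 2 + 2 ≠ 0 := by decide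
  exact hno a (by simpa using (mem_roots hmonic.ne_zero).1 ha)

theorem coeff_one : salemCubic.coeff 1 = X ^ 2 := by
  simp only [salemCubic, coeff_add, coeff_C_mul, coeff_X_pow, coeff_X, coeff_C]; norm_num

theorem coeff_two : salemCubic.coeff 2 = X + 1 := by
  simp only [salemCubic, coeff_add, coeff_C_mul, coeff_X_pow, coeff_X, coeff_C]; norm_num

theorem natDegree_coeff_one :
    (salemCubic.coeff 1).natDegree = 2 * (salemCubic.coeff 2).natDegree := by
  rw [coeff_one, coeff_two, natDegree_X_pow, ← C_1, natDegree_X_add_C]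

theorem eval_map_polyEmb (y : LaurentSeries (ZMod 3)) :
    (salemCubic.map (polyEmb (ZMod 3))).eval y =
      y ^ 3 + (HahnSeries.single (-1) 1 + 1) * y ^ 2 + HahnSeries.single (-1) 1 ^ 2 * y
        + (-HahnSeries.single (-1) 1 ^ 2 + 2) := by
  simp [salemCubic, polyEmb_X, map_ofNat]

theorem isRoot_map_polyEmb_single_add_ofPowerSeries {t : (ZMod 3)⟦X⟧}
    (ht : PowerSeries.X * t ^ 3 + (1 + PowerSeries.X) * t ^ 2 + 2 * t + 2 * PowerSeries.X = 0) :
    (salemCubic.map (polyEmb (ZMod 3))).IsRoot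
      (HahnSeries.single (-1) 1 + HahnSeries.ofPowerSeries ℤ (ZMod 3) t) := by
  have hg := congrArg (HahnSeries.ofPowerSeries ℤ (ZMod 3)) ht
  simp only [map_add, map_mul, map_pow, map_one, map_ofNat, map_zero] at hg
  rw [IsRoot.def, eval_map_polyEmb]
  refine (mul_eq_zero.1 ((salem_shift_identity ofNat_three_eq_zero
    HahnSeries.single_neg_one_mul_ofPowerSeries_X _).trans hg)).resolve_left ?_
  simp

theorem exists_roots_map_polyEmb : ∃ ω₁ ω₂ ω₃ : LaurentSeries (ZMod 3),
    (salemCubic.map (polyEmb (ZMod 3))).roots = {ω₁, ω₂, ω₃} ∧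
      ω₁.order = -1 ∧ ω₂.order = -1 ∧ ω₃ ≠ 0 ∧ ω₃.order = 0 := by
  obtain ⟨t₁, ht₁, hc₁⟩ := PowerSeries.exists_root_salemShiftedCubic (b := 0) (by decide)
  obtain ⟨t₂, ht₂, hc₂⟩ := PowerSeries.exists_root_salemShiftedCubic (b := 2) (by decide)
  simp only [sub_zero, div_one] at hc₁
  replace hc₂ : PowerSeries.constantCoeff t₂ = 1 :=
    hc₂.trans (by rw [show (1 - 2 : ZMod 3) = 2 from rfl, div_self (by decide)])
  set x : LaurentSeries (ZMod 3) := HahnSeries.single (-1) 1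
  set ι := HahnSeries.ofPowerSeries ℤ (ZMod 3)
  have hcc₃ : PowerSeries.constantCoeff (-1 - t₁ - t₂) ≠ 0 := by simp [hc₁, hc₂]; decide
  have hω₃ : ι (-1 - t₁ - t₂) = -(x + 1) - (x + ι t₁) - (x + ι t₂) := by
    simp only [map_sub, map_neg, map_one]
    linear_combination x * (ofNat_three_eq_zero : (3 : LaurentSeries (ZMod 3)) = 0)
  have ho₁ := HahnSeries.order_single_neg_one_add_ofPowerSeries t₁
  have ho₂ := HahnSeries.order_single_neg_one_add_ofPowerSeries t₂
  have ho₃ := HahnSeries.order_ofPowerSeries_eq_zero_s18 hcc₃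
  have h₁₂ : x + ι t₁ ≠ x + ι t₂ := fun h => by
    simpa [hc₁, hc₂] using congrArg PowerSeries.constantCoeff
      (HahnSeries.ofPowerSeries_injective (add_left_cancel h))
  have h₁₃ : x + ι t₁ ≠ ι (-1 - t₁ - t₂) :=
    ne_of_apply_ne HahnSeries.order (by rw [ho₁, ho₃]; decide)
  have h₂₃ : x + ι t₂ ≠ ι (-1 - t₁ - t₂) :=
    ne_of_apply_ne HahnSeries.order (by rw [ho₂, ho₃]; decide)
  have hr₁ := isRoot_map_polyEmb_single_add_ofPowerSeries ht₁
  have hr₂ := isRoot_map_polyEmb_single_add_ofPowerSeries ht₂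
  have hr₃ : (salemCubic.map (polyEmb (ZMod 3))).IsRoot (ι (-1 - t₁ - t₂)) := by
    rw [IsRoot.def, eval_map_polyEmb] at hr₁ hr₂ ⊢
    rw [hω₃]
    exact cubic_eval_neg_sub_sub_eq_zero h₁₂ hr₁ hr₂
  refine ⟨x + ι t₁, x + ι t₂, ι (-1 - t₁ - t₂), ?_, ho₁, ho₂, ?_, ho₃⟩
  · exact roots_eq_of_natDegree_le_three (monic.map _).ne_zero
      (by rw [monic.natDegree_map, natDegree_eq]) h₁₂ h₁₃ h₂₃ hr₁ hr₂ hr₃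
  · exact (map_ne_zero_iff _ HahnSeries.ofPowerSeries_injective).2 fun h => hcc₃ (by simp [h])

end salemCubic

theorem stmt_18_general (C : Type) [Field C]
    (φL : LaurentSeries (ZMod 3) →+* C) (abv : AbsoluteValue C ℝ)
    (hcomp : ∀ f : LaurentSeries (ZMod 3), f ≠ 0 → abv (φL f) = (3 : ℝ) ^ (-f.order))
    (Λ : Polynomial (Polynomial (ZMod 3)))
    (hΛ : Λ = Polynomial.X ^ 3
      + Polynomial.C (Polynomial.X + 1) * Polynomial.X ^ 2
      + Polynomial.C (Polynomial.X ^ 2) * Polynomial.X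
      + Polynomial.C (-Polynomial.X ^ 2 + 2)) :
    Irreducible Λ ∧
    (Λ.coeff 1).natDegree = 2 * (Λ.coeff 2).natDegree ∧
    ∃ ω₁ ω₂ ω₃ : C,
      (Λ.map (φL.comp (polyEmb (ZMod 3)))).roots = {ω₁, ω₂, ω₃} ∧
      ω₁ ∈ Set.range φL ∧ ω₂ ∈ Set.range φL ∧
      abv ω₁ = 3 ∧ abv ω₂ = 3 ∧ 1 < abv ω₁ ∧ 1 < abv ω₂ ∧ abv ω₃ = 1 := by
  have hΛ : Λ = salemCubic := hΛ
  subst hΛ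
  obtain ⟨ω₁, ω₂, ω₃, hroots, ho₁, ho₂, hne₃, ho₃⟩ := salemCubic.exists_roots_map_polyEmb
  have habv : ∀ ω : LaurentSeries (ZMod 3), ω.order = -1 → abv (φL ω) = 3 := fun ω ho => by
    rw [hcomp ω (ne_of_apply_ne HahnSeries.order (by rw [ho, HahnSeries.order_zero]; decide)),
      ho]
    norm_num
  refine ⟨salemCubic.irreducible, salemCubic.natDegree_coeff_one, φL ω₁, φL ω₂, φL ω₃, ?_,
    ⟨ω₁, rfl⟩, ⟨ω₂, rfl⟩, habv ω₁ ho₁, habv ω₂ ho₂, by norm_num [habv ω₁ ho₁],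
    by norm_num [habv ω₂ ho₂], by rw [hcomp ω₃ hne₃, ho₃]; norm_num⟩
  rw [← Polynomial.map_map, ← Polynomial.roots_map_of_injective_of_card_eq_natDegree
    φL.injective, hroots]
  · simp
  · rw [hroots, salemCubic.monic.natDegree_map, salemCubic.natDegree_eq]; rfl

theorem stmt_18 (C : Type) [Field C] [IsAlgClosed C]
    (φL : LaurentSeries (ZMod 3) →+* C) (abv : AbsoluteValue C ℝ)
    (hna : ∀ x y : C, abv (x + y) ≤ max (abv x) (abv y))
    (hcomp : ∀ f : LaurentSeries (ZMod 3), f ≠ 0 → abv (φL f) = (3 : ℝ) ^ (-f.order))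
    (Λ : Polynomial (Polynomial (ZMod 3)))
    (hΛ : Λ = Polynomial.X ^ 3
      + Polynomial.C (Polynomial.X + 1) * Polynomial.X ^ 2
      + Polynomial.C (Polynomial.X ^ 2) * Polynomial.X
      + Polynomial.C (-Polynomial.X ^ 2 + 2)) :
    Irreducible Λ ∧
    (Λ.coeff 1).natDegree = 2 * (Λ.coeff 2).natDegree ∧
    ∃ ω₁ ω₂ ω₃ : C,
      (Λ.map (φL.comp (polyEmb (ZMod 3)))).roots = {ω₁, ω₂, ω₃} ∧
      ω₁ ∈ Set.range φL ∧ ω₂ ∈ Set.range φL ∧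
      abv ω₁ = 3 ∧ abv ω₂ = 3 ∧ 1 < abv ω₁ ∧ 1 < abv ω₂ ∧ abv ω₃ = 1 :=
  stmt_18_general C φL abv hcomp Λ hΛ
end

section
/- The quartic polynomial Y⁴ − 2X²Y² + 2X² over F₃[X] is irreducible, and its two roots of absolute value > 1 do not lie in F₃((X^{-1})), while their squares do lie in F₃((X^{-1})); hence the squares form a 2-Salem element lying in F₃((X^{-1})) whose 'square roots' pair does not, showing the converse of the power-stability of T'₂* fails. -/
open scoped Classical
set_option linter.unusedVariables false

section Aux
open Polynomial

abbrev F3 := ZMod 3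
abbrev PS3 := PowerSeries F3


lemma mem_span_X_pow (f : PS3) (n : ℕ) :
    f ∈ (Ideal.span {(PowerSeries.X : PS3)}) ^ n ↔ ∀ m < n, PowerSeries.coeff m f = 0 := by
  rw [Ideal.span_singleton_pow, Ideal.mem_span_singleton]
  exact PowerSeries.X_pow_dvd_iff

instance ps3_adic : IsAdicComplete (Ideal.span {(PowerSeries.X : PS3)}) PS3 where
  haus' x hx := by
    ext m
    have h := hx (m + 1)
    rw [SModEq.sub_mem, sub_zero] at h
    simp only [← Ideal.one_eq_top, smul_eq_mul, mul_one] at h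
    rw [mem_span_X_pow] at h
    simpa using h m (Nat.lt_succ_self m)
  prec' f hf := by
    refine ⟨PowerSeries.mk fun m => PowerSeries.coeff m (f (m + 1)), fun n => ?_⟩
    rw [SModEq.sub_mem]
    simp only [← Ideal.one_eq_top, smul_eq_mul, mul_one]
    rw [mem_span_X_pow]
    intro m hm
    rw [map_sub, PowerSeries.coeff_mk, sub_eq_zero]
    rcases le_or_gt (m + 1) n with h | h
    · have := hf h
      rw [SModEq.sub_mem] at this
      simp only [← Ideal.one_eq_top, smul_eq_mul, mul_one] at this
      rw [mem_span_X_pow] at this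
      have := this m (Nat.lt_succ_self m)
      rw [map_sub, sub_eq_zero] at this
      exact this.symm
    · have := hf (le_of_lt h)
      rw [SModEq.sub_mem] at this
      simp only [← Ideal.one_eq_top, smul_eq_mul, mul_one] at this
      rw [mem_span_X_pow] at this
      have := this m hm
      rw [map_sub, sub_eq_zero] at this
      exact this

lemma exists_V : ∃ V : PS3, V * V + V + 2 * PowerSeries.X ^ 2 = 0 ∧
    PowerSeries.constantCoeff V = 0 := by
  have hmon : (Polynomial.X ^ 2 + (Polynomial.X + Polynomial.C (2 * PowerSeries.X ^ 2)) :
      Polynomial PS3).Monic := by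
    apply Polynomial.monic_X_pow_add (n := 2)
    apply lt_of_le_of_lt (Polynomial.degree_add_le _ _)
    rw [max_lt_iff]
    constructor
    · rw [Polynomial.degree_X]; norm_num
    · exact lt_of_le_of_lt Polynomial.degree_C_le (by norm_num)
  have h0 : (Polynomial.X ^ 2 + (Polynomial.X + Polynomial.C (2 * PowerSeries.X ^ 2)) :
      Polynomial PS3).eval 0 ∈ Ideal.span {(PowerSeries.X : PS3)} := by
    rw [Ideal.mem_span_singleton]
    simp only [Polynomial.eval_add, Polynomial.eval_pow, Polynomial.eval_X, Polynomial.eval_C]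
    exact ⟨2 * PowerSeries.X, by ring⟩
  have hderiv : IsUnit ((Ideal.Quotient.mk (Ideal.span {(PowerSeries.X : PS3)}))
      ((Polynomial.derivative (Polynomial.X ^ 2 + (Polynomial.X +
        Polynomial.C (2 * PowerSeries.X ^ 2)) : Polynomial PS3)).eval 0)) := by
    have : (Polynomial.derivative (Polynomial.X ^ 2 + (Polynomial.X +
        Polynomial.C (2 * PowerSeries.X ^ 2)) : Polynomial PS3)).eval 0 = 1 := by
      simp only [Polynomial.derivative_add, Polynomial.derivative_X_pow,
        Polynomial.derivative_X, Polynomial.derivative_C, Polynomial.eval_add,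
        Polynomial.eval_mul, Polynomial.eval_pow, Polynomial.eval_X, Polynomial.eval_one,
        Polynomial.eval_natCast, Polynomial.eval_C, add_zero]
      ring
    rw [this, map_one]
    exact isUnit_one
  obtain ⟨a, ha, ha0⟩ := HenselianRing.is_henselian (R := PS3)
    (I := Ideal.span {(PowerSeries.X : PS3)}) _ hmon 0 h0 hderiv
  refine ⟨a, ?_, ?_⟩
  · have := ha
    simp only [Polynomial.IsRoot, Polynomial.eval_add, Polynomial.eval_pow, Polynomial.eval_X,
      Polynomial.eval_C] at this
    linear_combination this
  · rw [sub_zero, Ideal.mem_span_singleton, PowerSeries.X_dvd_iff] at ha0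
    exact ha0
abbrev LS := LaurentSeries F3

lemma three_alg (A : Type*) [CommRing A] [Algebra F3 A] : (3 : A) = 0 := by
  rw [show (3 : A) = algebraMap F3 A 3 from (map_ofNat _ 3).symm,
    show (3 : F3) = 0 from rfl, map_zero]

noncomputable def eL : LS := HahnSeries.single (-2 : ℤ) (1 : F3)

lemma order_eq_zero_of {f : LS} (h0 : f.coeff 0 ≠ 0) (hneg : ∀ i : ℤ, i < 0 → f.coeff i = 0) :
    f.order = 0 := by
  refine le_antisymm (HahnSeries.order_le_of_coeff_ne_zero h0) ?_
  by_contra h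
  push_neg at h
  exact (mt HahnSeries.coeff_order_eq_zero.mp (HahnSeries.ne_zero_of_coeff_ne_zero h0)) (hneg _ h)

lemma exists_z (V : PS3) (hV : V * V + V + 2 * PowerSeries.X ^ 2 = 0)
    (hV0 : PowerSeries.constantCoeff V = 0) :
    ∃ z1 z2 : LS, z1 + z2 = 2 * eL ∧ z1 * z2 = 2 * eL ∧ z1.order = -2 ∧
      z1.coeff (-2) = 2 ∧ z2.order = 0 ∧ z1 ≠ 0 ∧ z2 ≠ 0 ∧ (∀ f : LS, f * f ≠ z1) := by
  classical
  set Vl : LS := HahnSeries.ofPowerSeries ℤ F3 V with hVl_def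
  have h3 : (3 : LS) = 0 := three_alg LS
  -- coefficients of Vl
  have hVc : ∀ i : ℤ, i ≤ 0 → Vl.coeff i = 0 := by
    intro i hi
    rw [hVl_def, show (HahnSeries.ofPowerSeries ℤ F3 V) = ((V : PS3) : LS) from rfl,
      PowerSeries.coeff_coe]
    rcases lt_or_eq_of_le hi with h | h
    · simp [h]
    · subst h
      simp [PowerSeries.coeff_zero_eq_constantCoeff, hV0]
  -- the defining equation in LS
  have hVlEq : Vl * Vl + Vl + 2 * (HahnSeries.single (1 : ℤ) (1 : F3) *
      HahnSeries.single (1 : ℤ) (1 : F3)) = 0 := by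
    have := congrArg (HahnSeries.ofPowerSeries ℤ F3) hV
    simpa only [map_add, map_mul, map_ofNat, map_pow, map_zero, HahnSeries.ofPowerSeries_X,
      pow_two] using this
  have hT2 : HahnSeries.single (1 : ℤ) (1 : F3) * HahnSeries.single (1 : ℤ) (1 : F3)
      = HahnSeries.single (2 : ℤ) (1 : F3) := by
    rw [HahnSeries.single_mul_single]; norm_num
  rw [hT2] at hVlEq
  have hVU : Vl * (Vl + 1) = HahnSeries.single (2 : ℤ) (1 : F3) := by
    linear_combination hVlEq - (HahnSeries.single (2 : ℤ) (1 : F3)) * h3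
  have hsingle_ne : (HahnSeries.single (2 : ℤ) (1 : F3)) ≠ 0 :=
    HahnSeries.single_ne_zero one_ne_zero
  have hVl_ne : Vl ≠ 0 := by
    intro h; rw [h, zero_mul] at hVU; exact hsingle_ne hVU.symm
  have hU_ne : Vl + 1 ≠ 0 := by
    intro h; rw [h, mul_zero] at hVU; exact hsingle_ne hVU.symm
  have hUc0 : (Vl + 1).coeff 0 = 1 := by
    rw [HahnSeries.coeff_add, hVc 0 le_rfl, HahnSeries.coeff_one, if_pos rfl, zero_add]
  have hU_ord : (Vl + 1).order = 0 := by
    apply order_eq_zero_of (by rw [hUc0]; exact one_ne_zero)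
    intro i hi
    rw [HahnSeries.coeff_add, hVc i hi.le, HahnSeries.coeff_one, if_neg hi.ne, zero_add]
  have hVl_ord : Vl.order = 2 := by
    have := HahnSeries.order_mul hVl_ne hU_ne
    rw [hVU, HahnSeries.order_single one_ne_zero, hU_ord, add_zero] at this
    exact this.symm
  -- W2 = 2 - Vl
  set W2 : LS := 2 - Vl with hW2_def
  have h2coeff : ∀ i : ℤ, (2 : LS).coeff i = if i = 0 then 2 else 0 := by
    intro i
    rw [show (2 : LS) = 1 + 1 by norm_num, HahnSeries.coeff_add, HahnSeries.coeff_one]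
    split <;> norm_num
  have hW2c0 : W2.coeff 0 = 2 := by
    rw [hW2_def, HahnSeries.coeff_sub, h2coeff, if_pos rfl, hVc 0 le_rfl, sub_zero]
  have hW2ne : W2 ≠ 0 := by
    intro h
    have h' := hW2c0
    rw [h, HahnSeries.coeff_zero] at h'
    exact (by decide : ¬(0 : F3) = 2) h'
  have hW2ord : W2.order = 0 := by
    apply order_eq_zero_of (by rw [hW2c0]; decide)
    intro i hi
    rw [hW2_def, HahnSeries.coeff_sub, h2coeff, if_neg hi.ne, hVc i hi.le, sub_zero]
  have heL_ne : eL ≠ 0 := HahnSeries.single_ne_zero one_ne_zero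
  refine ⟨eL * W2, eL * Vl, ?_, ?_, ?_, ?_, ?_, ?_, ?_, ?_⟩
  · rw [hW2_def]; ring
  · have hee : eL * eL * (HahnSeries.single (2 : ℤ) (1 : F3)) = eL := by
      rw [show eL * eL = HahnSeries.single (-4 : ℤ) (1 : F3) by
        rw [eL, HahnSeries.single_mul_single]; norm_num,
        HahnSeries.single_mul_single]
      norm_num [eL]
    calc eL * W2 * (eL * Vl) = eL * eL * (2 * Vl - Vl * Vl) := by rw [hW2_def]; ring
    _ = 2 * eL := by
        linear_combination (-(eL * eL)) * hVlEq + 2 * hee + (eL * eL * Vl) * h3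
  · rw [HahnSeries.order_mul heL_ne hW2ne, hW2ord, eL, HahnSeries.order_single one_ne_zero]
    norm_num
  · have := HahnSeries.coeff_single_mul_add (r := (1 : F3)) (x := W2) (a := (0 : ℤ)) (b := (-2 : ℤ))
    rw [hW2c0] at this
    simpa [eL] using this
  · rw [HahnSeries.order_mul heL_ne hVl_ne, hVl_ord, eL, HahnSeries.order_single one_ne_zero]
    norm_num
  · exact mul_ne_zero heL_ne hW2ne
  · exact mul_ne_zero heL_ne hVl_ne
  · intro f hf
    have hz1ne : eL * W2 ≠ 0 := mul_ne_zero heL_ne hW2ne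
    have hfne : f ≠ 0 := by
      intro h; rw [h, mul_zero] at hf; exact hz1ne hf.symm
    have hord : (f * f).order = f.order + f.order := HahnSeries.order_mul hfne hfne
    have hlc := HahnSeries.coeff_mul_order_add_order f f
    have hz1ord : (eL * W2).order = -2 := by
      rw [HahnSeries.order_mul heL_ne hW2ne, hW2ord, eL, HahnSeries.order_single one_ne_zero]
      norm_num
    have hz1c : (eL * W2).coeff (-2) = 2 := by
      have := HahnSeries.coeff_single_mul_add (r := (1 : F3)) (x := W2) (a := (0 : ℤ)) (b := (-2 : ℤ))
      rw [hW2c0] at this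
      simpa [eL] using this
    have hoo : f.order + f.order = (-2 : ℤ) := by rw [← hord, hf, hz1ord]
    rw [hoo, hf, hz1c] at hlc
    have h2 : ∀ a : F3, ¬(2 = a * a) := by decide
    have hlcf : f.leadingCoeff = f.coeff f.order := by
      rw [← HahnSeries.coeff_untop_eq_leadingCoeff (HahnSeries.orderTop_ne_top.2 hfne)]; congr 1
      rw [WithTop.untop_eq_iff, HahnSeries.order_eq_orderTop_of_ne_zero hfne]
    exact h2 _ hlc
abbrev R3 := Polynomial F3
abbrev K3 := FractionRing R3


lemma no_root_M (y : R3) : y ^ 2 + X ^ 2 * y + 2 * X ^ 2 ≠ 0 := by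
  intro h
  have h0 : Polynomial.eval 0 y = 0 := by
    have := congrArg (Polynomial.eval 0) h
    simp only [eval_add, eval_mul, eval_pow, eval_X, eval_zero, eval_ofNat] at this
    have h2 : (Polynomial.eval 0 y) ^ 2 = 0 := by linear_combination this
    exact sq_eq_zero_iff.mp h2
  have hdvd : (X : R3) ∣ y := Polynomial.X_dvd_iff.mpr
    (by rw [Polynomial.coeff_zero_eq_eval_zero]; exact h0)
  obtain ⟨q, rfl⟩ := hdvd
  have hq : q ^ 2 + X * q + 2 = 0 := by
    have h2 : (X : R3) ^ 2 * (q ^ 2 + X * q + 2) = 0 := by linear_combination h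
    rcases mul_eq_zero.mp h2 with h3 | h3
    · exact absurd h3 (pow_ne_zero _ Polynomial.X_ne_zero)
    · exact h3
  have hu : q * (q + X) = 1 := by linear_combination hq - three_alg R3
  obtain ⟨a, ha, haq⟩ := Polynomial.isUnit_iff.mp (IsUnit.of_mul_eq_one _ hu)
  rw [← haq] at hu
  have e1 := congrArg (fun p => Polynomial.coeff p 1) hu
  simp [Polynomial.coeff_one, Polynomial.coeff_C, Polynomial.coeff_X, mul_add] at e1
  rw [← haq, e1] at hq
  simp only [map_zero, zero_pow, mul_zero, zero_add, add_zero, ne_eq, OfNat.ofNat_ne_zero,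
    not_false_eq_true, pow_eq_zero_iff] at hq
  have e0 := congrArg (fun p => Polynomial.coeff p 0) hq
  simp at e0
  exact (by decide : ¬(2 : F3) = 0) e0
lemma not_square (y : R3) : y * y ≠ 2 * X ^ 2 := by
  intro h
  have h2X : (2 * X ^ 2 : R3) ≠ 0 := by
    intro hh
    have := congrArg (fun p => Polynomial.coeff p 2) hh
    simp at this
    exact (by decide : ¬(2 : F3) = 0) this
  have hy : y ≠ 0 := by rintro rfl; rw [zero_mul] at h; exact h2X h.symm
  have hl := congrArg Polynomial.leadingCoeff h
  rw [Polynomial.leadingCoeff_mul,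
    show (2 * X ^ 2 : R3) = Polynomial.C 2 * X ^ 2 from by
      rw [map_ofNat Polynomial.C 2],
    Polynomial.leadingCoeff_C_mul_X_pow] at hl
  exact (by decide : ∀ a : F3, ¬(a * a = 2)) _ hl

lemma noRootM' (r : K3) : r ^ 2 + algebraMap R3 K3 (X ^ 2) * r + algebraMap R3 K3 (2 * X ^ 2) ≠ 0 := by
  intro h
  have hint : IsIntegral R3 r := by
    refine ⟨X ^ 2 + (C (X ^ 2) * X + C (2 * X ^ 2)), ?_, ?_⟩
    · apply Polynomial.monic_X_pow_add (n := 2)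
      exact lt_of_le_of_lt degree_linear_le (by norm_num)
    · simp only [eval₂_add, eval₂_mul, eval₂_pow, eval₂_X, eval₂_C]
      linear_combination h
  obtain ⟨y, rfl⟩ := IsIntegrallyClosed.isIntegral_iff.mp hint
  apply no_root_M y
  apply IsFractionRing.injective R3 K3
  rw [map_zero, map_add, map_add, map_mul, map_pow]
  linear_combination h

lemma noSq' (r : K3) : r * r ≠ algebraMap R3 K3 (2 * X ^ 2) := by
  intro h
  have hint : IsIntegral R3 r := by
    refine ⟨X ^ 2 + C (-(2 * X ^ 2)), ?_, ?_⟩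
    · apply Polynomial.monic_X_pow_add (n := 2)
      exact lt_of_le_of_lt degree_C_le (by norm_num)
    · simp only [eval₂_add, eval₂_neg, eval₂_pow, eval₂_X, eval₂_C, map_neg]
      linear_combination h
  obtain ⟨y, rfl⟩ := IsIntegrallyClosed.isIntegral_iff.mp hint
  apply not_square y
  apply IsFractionRing.injective R3 K3
  rw [map_mul]
  exact h

lemma monic_M2 : (X ^ 2 + (C (X ^ 2) * X + C (2 * X ^ 2)) : R3[X]).Monic := by
  apply Polynomial.monic_X_pow_add (n := 2)
  exact lt_of_le_of_lt degree_linear_le (by norm_num)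

lemma natDegree_M2 : (X ^ 2 + (C (X ^ 2) * X + C (2 * X ^ 2)) : R3[X]).natDegree = 2 := by
  have h : (X ^ 2 + (C (X ^ 2) * X + C (2 * X ^ 2)) : R3[X]).degree = 2 := by
    rw [add_comm, Polynomial.degree_add_eq_right_of_degree_lt
      (by rw [Polynomial.degree_X_pow]; exact lt_of_le_of_lt degree_linear_le (by norm_num))]
    exact Polynomial.degree_X_pow 2
  exact natDegree_eq_of_degree_eq_some h

lemma deg_low4 : (C ((X : R3) ^ 2) * X ^ 2 + C (2 * X ^ 2) : R3[X]).degree < 4 := by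
  apply lt_of_le_of_lt (Polynomial.degree_add_le _ _)
  rw [max_lt_iff]
  constructor
  · apply lt_of_le_of_lt (Polynomial.degree_mul_le _ _)
    calc (C ((X : R3) ^ 2)).degree + ((X : R3[X]) ^ 2).degree ≤ 0 + 2 :=
          add_le_add Polynomial.degree_C_le (le_of_eq (Polynomial.degree_X_pow 2))
      _ < 4 := by decide
  · exact lt_of_le_of_lt degree_C_le (by decide)

lemma monic_M4 : (X ^ 4 + (C (X ^ 2) * X ^ 2 + C (2 * X ^ 2)) : R3[X]).Monic := by
  apply Polynomial.monic_X_pow_add (n := 4)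
  exact deg_low4

lemma natDegree_M4 : (X ^ 4 + (C (X ^ 2) * X ^ 2 + C (2 * X ^ 2)) : R3[X]).natDegree = 4 := by
  have h : (X ^ 4 + (C (X ^ 2) * X ^ 2 + C (2 * X ^ 2)) : R3[X]).degree = 4 := by
    rw [add_comm, Polynomial.degree_add_eq_right_of_degree_lt
      (by rw [Polynomial.degree_X_pow]; exact deg_low4)]
    exact Polynomial.degree_X_pow 4
  exact natDegree_eq_of_degree_eq_some h

lemma irred_M2 : Irreducible (X ^ 2 + (C (X ^ 2) * X + C (2 * X ^ 2)) : R3[X]) := by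
  rw [monic_M2.irreducible_iff_irreducible_map_fraction_map (K := K3)]
  rw [Polynomial.irreducible_iff_roots_eq_zero_of_degree_le_three]
  · rw [Multiset.eq_zero_iff_forall_notMem]
    intro r hr
    have hne : ((X ^ 2 + (C (X ^ 2) * X + C (2 * X ^ 2)) : R3[X]).map (algebraMap R3 K3)) ≠ 0 :=
      (monic_M2.map (algebraMap R3 K3)).ne_zero
    have hroot := (Polynomial.mem_roots hne).mp hr
    rw [Polynomial.IsRoot, Polynomial.eval_map] at hroot
    simp only [eval₂_add, eval₂_mul, eval₂_pow, eval₂_X, eval₂_C] at hroot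
    exact noRootM' r (by linear_combination hroot)
  · rw [monic_M2.natDegree_map (algebraMap R3 K3)]; rw [natDegree_M2]
  · rw [monic_M2.natDegree_map (algebraMap R3 K3)]; rw [natDegree_M2]; norm_num

lemma quad_rep {K : Type*} [Field K] (p : K[X]) (hm : p.Monic) (hd : p.natDegree = 2) :
    p = X ^ 2 + C (p.coeff 1) * X + C (p.coeff 0) := by
  ext n
  match n with
  | 0 => simp [Polynomial.coeff_X_pow]
  | 1 => simp [Polynomial.coeff_X_pow, Polynomial.coeff_C]
  | 2 =>
    have := hm.coeff_natDegree
    rw [hd] at this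
    simp [Polynomial.coeff_X_pow, Polynomial.coeff_C, this]
  | (n + 3) =>
    rw [Polynomial.coeff_eq_zero_of_natDegree_lt (by omega : p.natDegree < n + 3)]
    simp [Polynomial.coeff_X_pow, Polynomial.coeff_C]

lemma irred_M4 : Irreducible (X ^ 4 + (C (X ^ 2) * X ^ 2 + C (2 * X ^ 2)) : R3[X]) := by
  rw [monic_M4.irreducible_iff_irreducible_map_fraction_map (K := K3)]
  set P : K3 := algebraMap R3 K3 (X ^ 2) with hP
  set Qc : K3 := algebraMap R3 K3 (2 * X ^ 2) with hQc
  have hmap : (X ^ 4 + (C (X ^ 2) * X ^ 2 + C (2 * X ^ 2)) : R3[X]).map (algebraMap R3 K3)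
      = X ^ 4 + (C P * X ^ 2 + C Qc) := by
    simp only [Polynomial.map_add, Polynomial.map_mul, Polynomial.map_pow,
      Polynomial.map_X, Polynomial.map_C]
    rfl
  rw [hmap]
  have hmono : (X ^ 4 + (C P * X ^ 2 + C Qc) : K3[X]).Monic := by
    rw [← hmap]; exact monic_M4.map _
  have hnd : (X ^ 4 + (C P * X ^ 2 + C Qc) : K3[X]).natDegree = 4 := by
    rw [← hmap, monic_M4.natDegree_map (algebraMap R3 K3), natDegree_M4]
  rw [hmono.irreducible_iff_lt_natDegree_lt (by
    intro h1
    rw [h1, Polynomial.natDegree_one] at hnd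
    exact absurd hnd (by norm_num))]
  intro q hq hqd hdvd
  rw [hnd, Finset.mem_Ioc] at hqd
  obtain ⟨hqd1, hqd2⟩ := hqd
  obtain ⟨g, hg⟩ := hdvd
  have hgne : g ≠ 0 := by
    intro h
    rw [h, mul_zero] at hg
    exact hmono.ne_zero hg
  have hqne : q ≠ 0 := hq.ne_zero
  have hdegs : q.natDegree + g.natDegree = 4 := by
    rw [← Polynomial.natDegree_mul hqne hgne, ← hg, hnd]
  interval_cases hqd' : q.natDegree
  · -- degree 1 : root
    have hrep := hq.eq_X_add_C hqd'
    have hroot : (X ^ 4 + (C P * X ^ 2 + C Qc) : K3[X]).eval (-(q.coeff 0)) = 0 := by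
      rw [hg, Polynomial.eval_mul, hrep]
      simp
    simp only [Polynomial.eval_add, Polynomial.eval_mul, Polynomial.eval_pow,
      Polynomial.eval_X, Polynomial.eval_C] at hroot
    rw [hQc] at hroot
    exact noRootM' ((q.coeff 0) ^ 2) (by linear_combination hroot)
  · -- degree 2
    have hgm : g.Monic := hq.of_mul_monic_left (by rw [← hg]; exact hmono)
    have hgd : g.natDegree = 2 := by omega
    have hqrep := quad_rep q hq hqd'
    have hgrep := quad_rep g hgm hgd
    set q1 := q.coeff 1; set q0 := q.coeff 0
    set r1 := g.coeff 1; set r0 := g.coeff 0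
    have hE : (X ^ 4 + (C P * X ^ 2 + C Qc) : K3[X]) =
        X ^ 4 + C (q1 + r1) * X ^ 3 + C (q0 + r0 + q1 * r1) * X ^ 2 +
          C (q0 * r1 + q1 * r0) * X + C (q0 * r0) := by
      rw [hg, hqrep, hgrep]
      simp only [Polynomial.C_add, Polynomial.C_mul]
      ring
    have c3 := congrArg (fun p => Polynomial.coeff p 3) hE
    have c2 := congrArg (fun p => Polynomial.coeff p 2) hE
    have c1 := congrArg (fun p => Polynomial.coeff p 1) hE
    have c0 := congrArg (fun p => Polynomial.coeff p 0) hE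
    simp only [Polynomial.coeff_add, Polynomial.coeff_C_mul, Polynomial.coeff_X_pow,
      Polynomial.coeff_C, Polynomial.coeff_X] at c3 c2 c1 c0
    norm_num at c3 c2 c1 c0
    -- c3 : 0 = q1 + r1, c2 : P = q0 + r0 + q1*r1, c1 : 0 = q0*r1 + q1*r0, c0 : Qc = q0*r0
    by_cases hq1 : q1 = 0
    · refine noRootM' (-q0) ?_
      linear_combination (-q0) * hP.symm + hQc.symm + (-q0) * c2 + c0 + (-(q0 * r1)) * hq1
    · have h5 : q1 * (r0 - q0) = 0 := by linear_combination -c1 + q0 * c3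
      have hr0 : r0 = q0 := by
        rcases mul_eq_zero.mp h5 with h6 | h6
        · exact absurd h6 hq1
        · exact sub_eq_zero.mp h6
      refine noSq' q0 ?_
      linear_combination -c0 + hQc - q0 * hr0

end Aux

open Polynomial in
theorem stmt_19 (C : Type) [Field C] [IsAlgClosed C]
    (φL : LaurentSeries (ZMod 3) →+* C) (abv : AbsoluteValue C ℝ)
    (hna : ∀ x y : C, abv (x + y) ≤ max (abv x) (abv y))
    (hcomp : ∀ f : LaurentSeries (ZMod 3), f ≠ 0 → abv (φL f) = (3 : ℝ) ^ (-f.order))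
    (Λ : Polynomial (Polynomial (ZMod 3)))
    (hΛ : Λ = Polynomial.X ^ 4
      - Polynomial.C (2 * Polynomial.X ^ 2) * Polynomial.X ^ 2
      + Polynomial.C (2 * Polynomial.X ^ 2)) :
    Irreducible Λ ∧
    ∃ ω₁ ω₂ : C, ω₁ ≠ ω₂ ∧
      (Λ.map (φL.comp (polyEmb (ZMod 3)))).eval ω₁ = 0 ∧
      (Λ.map (φL.comp (polyEmb (ZMod 3)))).eval ω₂ = 0 ∧
      1 < abv ω₁ ∧ 1 < abv ω₂ ∧
      (∀ z ∈ (Λ.map (φL.comp (polyEmb (ZMod 3)))).roots, 1 < abv z → z = ω₁ ∨ z = ω₂) ∧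
      ω₁ ∉ Set.range φL ∧ ω₂ ∉ Set.range φL ∧
      ω₁ ^ 2 ∈ Set.range φL ∧ ω₂ ^ 2 ∈ Set.range φL ∧
      ∃ M : Polynomial (Polynomial (ZMod 3)), M.Monic ∧ Irreducible M ∧
        (M.map (φL.comp (polyEmb (ZMod 3)))).eval (ω₁ ^ 2) = 0 ∧
        (M.map (φL.comp (polyEmb (ZMod 3)))).eval (ω₂ ^ 2) = 0 ∧
        (∀ z ∈ (M.map (φL.comp (polyEmb (ZMod 3)))).roots,
          z ≠ ω₁ ^ 2 → z ≠ ω₂ ^ 2 → abv z ≤ 1) ∧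
        (∃ z ∈ (M.map (φL.comp (polyEmb (ZMod 3)))).roots, abv z = 1) := by
  obtain ⟨V, hV, hV0⟩ := exists_V
  obtain ⟨z1, z2, hsum, hprod, hz1ord, hz1c, hz2ord, hz1ne, hz2ne, hz1nsq⟩ := exists_z V hV hV0
  have hΛirr : Irreducible Λ := by
    have hCeq : (Polynomial.C (2 * X ^ 2) : R3[X]) = 2 * Polynomial.C (X ^ 2) := by
      rw [map_mul, map_ofNat]
    have hEq : (X ^ 4 - Polynomial.C (2 * X ^ 2) * X ^ 2 + Polynomial.C (2 * X ^ 2) : R3[X])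
        = X ^ 4 + (Polynomial.C (X ^ 2) * X ^ 2 + Polynomial.C (2 * X ^ 2)) := by
      rw [hCeq]
      linear_combination (-(Polynomial.C ((Polynomial.X : R3) ^ 2) * Polynomial.X ^ 2)) *
        three_alg (R3[X])
    rw [hΛ, hEq]
    exact irred_M4
  refine ⟨hΛirr, ?_⟩
  set ψ : R3 →+* C := φL.comp (polyEmb (ZMod 3)) with hψdef
  have hφinj : Function.Injective φL := φL.injective
  -- basic char-3 facts in C
  have h3C : (3 : C) = 0 := by
    rw [← map_ofNat φL 3, three_alg LS, map_zero]
  have h2C : (2 : C) ≠ 0 := by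
    intro h2
    exact one_ne_zero (by linear_combination h3C - h2 : (1 : C) = 0)
  -- the image of eL and key constants
  set c : C := φL eL with hcdef
  set u1 : C := φL z1 with hu1def
  set u2 : C := φL z2 with hu2def
  have heL_ne : eL ≠ 0 := HahnSeries.single_ne_zero one_ne_zero
  have hmapne : ∀ w : LS, w ≠ 0 → φL w ≠ 0 := by
    intro w hw h
    exact hw (hφinj (by rw [h, map_zero]))
  have hc_ne : c ≠ 0 := hmapne eL heL_ne
  have hu1_ne : u1 ≠ 0 := hmapne z1 hz1ne
  have hu2_ne : u2 ≠ 0 := hmapne z2 hz2ne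
  have husum : u1 + u2 = 2 * c := by
    rw [hu1def, hu2def, hcdef, ← map_add, hsum, map_mul, map_ofNat]
  have huprod : u1 * u2 = 2 * c := by
    rw [hu1def, hu2def, hcdef, ← map_mul, hprod, map_mul, map_ofNat]
  -- values of ψ
  have hψX2 : ψ ((X : R3) ^ 2) = c := by
    rw [hψdef, RingHom.comp_apply]
    have : polyEmb (ZMod 3) ((X : R3) ^ 2) = eL := by
      rw [polyEmb, Polynomial.coe_eval₂RingHom, Polynomial.eval₂_pow, Polynomial.eval₂_X]
      rw [HahnSeries.single_pow]
      norm_num [eL]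
    rw [this, hcdef]
  have hψ2X2 : ψ ((2 : R3) * X ^ 2) = 2 * c := by
    rw [map_mul, map_ofNat, hψX2]
  -- the mapped quartic and its factorization
  have hmapped : Λ.map ψ = X ^ 4 - Polynomial.C (2 * c) * X ^ 2 + Polynomial.C (2 * c) := by
    rw [hΛ]
    simp only [Polynomial.map_add, Polynomial.map_sub, Polynomial.map_pow, Polynomial.map_mul,
      Polynomial.map_X, Polynomial.map_C, hψ2X2]
  have hFact : Λ.map ψ = (X ^ 2 - Polynomial.C u1) * (X ^ 2 - Polynomial.C u2) := by
    have key : (X ^ 2 - Polynomial.C u1) * (X ^ 2 - Polynomial.C u2)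
        = X ^ 4 - Polynomial.C (u1 + u2) * X ^ 2 + Polynomial.C (u1 * u2) := by
      simp only [Polynomial.C_add, Polynomial.C_mul]
      ring
    rw [hmapped, key, husum, huprod]
  have hQne : Λ.map ψ ≠ 0 := by
    rw [hFact]
    refine mul_ne_zero (fun h => hu1_ne ?_) (fun h => hu2_ne ?_) <;>
    · have := congrArg (Polynomial.eval 0) h
      simpa using this
  -- square roots
  obtain ⟨ω₁, hω₁⟩ := IsAlgClosed.exists_pow_nat_eq (k := C) u1 (n := 2) (by norm_num)
  set ω₂ : C := -ω₁ with hω₂def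
  have hω₂sq : ω₂ ^ 2 = u1 := by rw [hω₂def, neg_pow]; simpa using hω₁
  have hω₁ne : ω₁ ≠ 0 := fun h0 => hu1_ne (by rw [← hω₁, h0]; ring)
  -- absolute values
  have habs_u1 : abv u1 = 9 := by
    rw [hu1def, hcomp z1 hz1ne, hz1ord]
    norm_num
  have habs_u2 : abv u2 = 1 := by
    rw [hu2def, hcomp z2 hz2ne, hz2ord]
    norm_num
  have habs1 : 1 < abv ω₁ := by
    have h9 : abv ω₁ * abv ω₁ = 9 := by
      have := abv.map_mul ω₁ ω₁
      rw [← pow_two, hω₁, habs_u1] at this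
      linarith [this]
    nlinarith [abv.nonneg ω₁]
  have habs2 : 1 < abv ω₂ := by
    have h9 : abv ω₂ * abv ω₂ = 9 := by
      have := abv.map_mul ω₂ ω₂
      rw [← pow_two, hω₂sq, habs_u1] at this
      linarith [this]
    nlinarith [abv.nonneg ω₂]
  -- evaluation of the quartic
  have heval : ∀ t : C, t ^ 2 = u1 → (Λ.map ψ).eval t = 0 := by
    intro t ht
    rw [hFact]
    simp only [Polynomial.eval_mul, Polynomial.eval_sub, Polynomial.eval_pow,
      Polynomial.eval_X, Polynomial.eval_C]
    rw [ht, sub_self, zero_mul]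
  refine ⟨ω₁, ω₂, ?_, heval ω₁ hω₁, heval ω₂ hω₂sq, habs1, habs2, ?_, ?_, ?_, ?_, ?_, ?_⟩
  · -- ω₁ ≠ ω₂
    intro h
    have : (2 : C) * ω₁ = 0 := by rw [hω₂def] at h; linear_combination h
    rcases mul_eq_zero.mp this with h' | h'
    · exact h2C h'
    · exact hω₁ne h'
  · -- root classification
    intro z hz habz
    have hroot := (Polynomial.mem_roots hQne).mp hz
    rw [Polynomial.IsRoot, hFact] at hroot
    simp only [Polynomial.eval_mul, Polynomial.eval_sub, Polynomial.eval_pow,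
      Polynomial.eval_X, Polynomial.eval_C] at hroot
    rcases mul_eq_zero.mp hroot with h' | h'
    · have hz2 : z ^ 2 = ω₁ ^ 2 := by rw [hω₁]; linear_combination h'
      have : (z - ω₁) * (z + ω₁) = 0 := by linear_combination hz2
      rcases mul_eq_zero.mp this with h'' | h''
      · left; linear_combination h''
      · right; rw [hω₂def]; linear_combination h''
    · exfalso
      have hzu2 : z ^ 2 = u2 := by linear_combination h'
      have : abv z * abv z = 1 := by
        have := abv.map_mul z z
        rw [← pow_two, hzu2, habs_u2] at this
        linarith [this]
      nlinarith [abv.nonneg z]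
  · -- ω₁ not in the range
    rintro ⟨f, hf⟩
    apply hz1nsq f
    apply hφinj
    rw [map_mul, hf, ← hu1def, ← hω₁]
    ring
  · -- ω₂ not in the range
    rintro ⟨f, hf⟩
    apply hz1nsq (-f)
    apply hφinj
    rw [map_mul, map_neg, hf, ← hu1def, hω₂def, ← hω₁]
    ring
  · exact ⟨z1, by rw [← hu1def, hω₁]⟩
  · exact ⟨z1, by rw [← hu1def, hω₂sq]⟩
  · -- the quadratic M
    have hMmap : (X ^ 2 + (Polynomial.C (X ^ 2) * X + Polynomial.C (2 * X ^ 2)) : R3[X]).map ψ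
        = (X - Polynomial.C u1) * (X - Polynomial.C u2) := by
      have hm1 : (X ^ 2 + (Polynomial.C (X ^ 2) * X + Polynomial.C (2 * X ^ 2)) : R3[X]).map ψ
          = X ^ 2 + (Polynomial.C c * X + Polynomial.C (2 * c)) := by
        simp only [Polynomial.map_add, Polynomial.map_pow, Polynomial.map_mul,
          Polynomial.map_X, Polynomial.map_C, hψX2, hψ2X2]
      have key : (X - Polynomial.C u1) * (X - Polynomial.C u2)
          = X ^ 2 - Polynomial.C (u1 + u2) * X + Polynomial.C (u1 * u2) := by
        simp only [Polynomial.C_add, Polynomial.C_mul]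
        ring
      rw [hm1, key, husum, huprod]
      have hcc : Polynomial.C c = -(Polynomial.C (2 * c)) := by
        rw [← map_neg]
        congr 1
        linear_combination c * h3C
      rw [hcc]
      ring
    have hMne : (X ^ 2 + (Polynomial.C (X ^ 2) * X + Polynomial.C (2 * X ^ 2)) : R3[X]).map ψ
        ≠ 0 := by
      rw [hMmap]
      exact mul_ne_zero (Polynomial.X_sub_C_ne_zero u1) (Polynomial.X_sub_C_ne_zero u2)
    refine ⟨X ^ 2 + (Polynomial.C (X ^ 2) * X + Polynomial.C (2 * X ^ 2)), monic_M2, irred_M2,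
      ?_, ?_, ?_, ?_⟩
    · rw [hMmap, Polynomial.eval_mul, Polynomial.eval_sub, Polynomial.eval_X,
        Polynomial.eval_C, hω₁, sub_self, zero_mul]
    · rw [hMmap, Polynomial.eval_mul, Polynomial.eval_sub, Polynomial.eval_X,
        Polynomial.eval_C, hω₂sq, sub_self, zero_mul]
    · intro z hz hz1' hz2'
      have hroot := (Polynomial.mem_roots hMne).mp hz
      rw [Polynomial.IsRoot, hMmap] at hroot
      simp only [Polynomial.eval_mul, Polynomial.eval_sub, Polynomial.eval_X,
        Polynomial.eval_C] at hroot
      rcases mul_eq_zero.mp hroot with h' | h'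
      · exact absurd (by rw [hω₁]; linear_combination h' : z = ω₁ ^ 2) hz1'
      · have hzz : z = u2 := by linear_combination h'
        rw [hzz, habs_u2]
    · refine ⟨u2, ?_, habs_u2⟩
      rw [Polynomial.mem_roots hMne, Polynomial.IsRoot, hMmap]
      simp only [Polynomial.eval_mul, Polynomial.eval_sub, Polynomial.eval_X,
        Polynomial.eval_C]
      rw [sub_self, mul_zero]
end
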